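/- arXiv:1505.06011 — 4 statements merged into one kernel-verified Lean document; each statement's English description precedes it below -/
import Mathlib

section
/- For the quiver A_3, the convex hull of the six positive roots (1,0,0),(0,1,0),(0,0,1),(1,1,0),(0,1,1),(1,1,1) together with the origin in R^3 has normalized (integral) volume 5. -/
open MeasureTheory Set
open scoped ENNReal


def E3 : Set (Fin 3 → ℝ) :=
  {x | 0 ≤ x 0 ∧ x 0 ≤ 1 ∧ 0 ≤ x 1 ∧ x 1 ≤ 1 ∧ 0 ≤ x 2 ∧ x 2 ≤ 1 ∧ x 0 - x 1 + x 2 ≤ 1}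

lemma E3_sub_hull : E3 ⊆ convexHull ℝ
    ({![0, 0, 0], ![1, 0, 0], ![0, 1, 0], ![0, 0, 1], ![1, 1, 0], ![0, 1, 1], ![1, 1, 1]} :
      Set (Fin 3 → ℝ)) := by
  intro x hx
  obtain ⟨h1, h2, h3, h4, h5, h6, h7⟩ := hx
  set a := x 0 with hadef
  set b := x 1 with hbdef
  set c := x 2 with hcdef
  set t : ℝ := max 0 (a + c - 1) with htdef
  set u : ℝ := min (b - t) (a - t) with hudef
  set v : ℝ := min (b - t - u) (c - t) with hvdef
  set q : ℝ := b - t - u - v with hqdef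
  set p : ℝ := a - u - t with hpdef
  set r : ℝ := c - v - t with hrdef
  set s : ℝ := 1 - (p + q + r + u + v + t) with hsdef
  have ht0 : 0 ≤ t := le_max_left _ _
  have htb : t ≤ b := max_le h3 (by linarith)
  have hta : t ≤ a := max_le h1 (by linarith)
  have htc : t ≤ c := max_le h5 (by linarith)
  have hu0 : 0 ≤ u := le_min (by linarith) (by linarith)
  have hub : u ≤ b - t := min_le_left _ _
  have hua : u ≤ a - t := min_le_right _ _
  have hv0 : 0 ≤ v := le_min (by linarith) (by linarith)
  have hvb : v ≤ b - t - u := min_le_left _ _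
  have hvc : v ≤ c - t := min_le_right _ _
  have hq0 : 0 ≤ q := by simp only [hqdef]; linarith
  have hp0 : 0 ≤ p := by simp only [hpdef]; linarith
  have hr0 : 0 ≤ r := by simp only [hrdef]; linarith
  have hs0 : 0 ≤ s := by
    have hsum : p + q + r + u + v + t = a + c - t + q := by
      simp only [hpdef, hqdef, hrdef]; ring
    rw [hsdef, hsum]
    rcases max_cases (0:ℝ) (a + c - 1) with ⟨ht, hle⟩ | ⟨ht, hle⟩ <;>
      rcases min_cases (b - t) (a - t) with ⟨hu, _⟩ | ⟨hu, _⟩ <;>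
      rcases min_cases (b - t - u) (c - t) with ⟨hv, _⟩ | ⟨hv, _⟩ <;>
      rw [htdef] at * <;> rw [hudef] at * <;> rw [hvdef] at * <;>
      simp only [hqdef, ht, hu, hv] at * <;> linarith
  -- express x as the convex combination
  set S : Set (Fin 3 → ℝ) :=
    ({![0, 0, 0], ![1, 0, 0], ![0, 1, 0], ![0, 0, 1], ![1, 1, 0], ![0, 1, 1], ![1, 1, 1]} :
      Set (Fin 3 → ℝ)) with hS
  have hmem : ∀ y ∈ S, y ∈ convexHull ℝ S := fun y hy => subset_convexHull ℝ S hy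
  have hx_eq : x = s • (![0,0,0] : Fin 3 → ℝ) + p • ![1,0,0] + q • ![0,1,0] + r • ![0,0,1]
      + u • ![1,1,0] + v • ![0,1,1] + t • ![1,1,1] := by
    funext i
    fin_cases i <;>
      simp [Pi.add_apply, Pi.smul_apply, smul_eq_mul, Matrix.cons_val_zero, Matrix.cons_val_one,
        Matrix.head_cons] <;>
    · simp only [hpdef, hqdef, hrdef]; ring_nf; rfl
  rw [hx_eq]
  have hsum1 : s + p + q + r + u + v + t = 1 := by rw [hsdef]; ring
  set ww : Fin 7 → ℝ := ![s, p, q, r, u, v, t] with hww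
  set zz : Fin 7 → (Fin 3 → ℝ) := ![![0,0,0], ![1,0,0], ![0,1,0], ![0,0,1], ![1,1,0], ![0,1,1], ![1,1,1]] with hzz
  have key := (convex_convexHull ℝ S).sum_mem (t := Finset.univ) (w := ww) (z := zz)
    (by intro i _; fin_cases i <;> simpa [hww, Matrix.cons_val_succ'] using by first | exact hs0 | exact hp0 | exact hq0 | exact hr0 | exact hu0 | exact hv0 | exact ht0)
    (by rw [Fin.sum_univ_seven]; simpa [hww, Matrix.cons_val_succ'] using hsum1)
    (by
      intro i _
      fin_cases i
      · exact hmem _ (Set.mem_insert _ _)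
      · exact hmem _ (Set.mem_insert_of_mem _ (Set.mem_insert _ _))
      · exact hmem _ (Set.mem_insert_of_mem _ (Set.mem_insert_of_mem _ (Set.mem_insert _ _)))
      · exact hmem _ (Set.mem_insert_of_mem _ (Set.mem_insert_of_mem _ (Set.mem_insert_of_mem _ (Set.mem_insert _ _))))
      · exact hmem _ (Set.mem_insert_of_mem _ (Set.mem_insert_of_mem _ (Set.mem_insert_of_mem _ (Set.mem_insert_of_mem _ (Set.mem_insert _ _)))))
      · exact hmem _ (Set.mem_insert_of_mem _ (Set.mem_insert_of_mem _ (Set.mem_insert_of_mem _ (Set.mem_insert_of_mem _ (Set.mem_insert_of_mem _ (Set.mem_insert _ _))))))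
      · exact hmem _ (Set.mem_insert_of_mem _ (Set.mem_insert_of_mem _ (Set.mem_insert_of_mem _ (Set.mem_insert_of_mem _ (Set.mem_insert_of_mem _ (Set.mem_insert_of_mem _ rfl)))))))
  rw [Fin.sum_univ_seven] at key
  have w5 : (![s, p, q, r, u, v, t] : Fin 7 → ℝ) 5 = v := rfl
  have w6 : (![s, p, q, r, u, v, t] : Fin 7 → ℝ) 6 = t := rfl
  have z5 : (![![0,0,0], ![1,0,0], ![0,1,0], ![0,0,1], ![1,1,0], ![0,1,1], ![1,1,1]] : Fin 7 → Fin 3 → ℝ) 5 = ![0,1,1] := rfl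
  have z6 : (![![0,0,0], ![1,0,0], ![0,1,0], ![0,0,1], ![1,1,0], ![0,1,1], ![1,1,1]] : Fin 7 → Fin 3 → ℝ) 6 = ![1,1,1] := rfl
  simp only [hww, hzz, w5, w6, z5, z6, Matrix.cons_val_zero, Matrix.cons_val_one,
    Matrix.head_cons, Matrix.cons_val_two, Matrix.tail_cons, Matrix.cons_val_three,
    Matrix.cons_val_four] at key
  exact hx_eq ▸ key


-- inner slice: fixed a, b
lemma inner_slice (a b : ℝ) :
    {c : ℝ | 0 ≤ c ∧ c ≤ 1 ∧ a - b + c ≤ 1} = Icc 0 (min 1 (1 - a + b)) := by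
  ext c
  simp only [mem_setOf_eq, mem_Icc, le_min_iff]
  constructor
  · rintro ⟨h1, h2, h3⟩; exact ⟨h1, h2, by linarith⟩
  · rintro ⟨h1, h2, h3⟩; exact ⟨h1, h2, by linarith⟩

lemma mid_isClosed (a : ℝ) :
    IsClosed {q : ℝ × ℝ | 0 ≤ q.1 ∧ q.1 ≤ 1 ∧ 0 ≤ q.2 ∧ q.2 ≤ 1 ∧ a - q.1 + q.2 ≤ 1} := by
  apply IsClosed.inter (isClosed_le continuous_const continuous_fst)
  apply IsClosed.inter (isClosed_le continuous_fst continuous_const)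
  apply IsClosed.inter (isClosed_le continuous_const continuous_snd)
  apply IsClosed.inter (isClosed_le continuous_snd continuous_const)
  exact isClosed_le ((continuous_const.sub continuous_fst).add continuous_snd) continuous_const

lemma mid_integral (a : ℝ) (ha : a ∈ Icc (0:ℝ) 1) :
    ∫ b in Icc (0:ℝ) 1, min 1 (1 - a + b) = 1 - a^2/2 := by
  obtain ⟨ha0, ha1⟩ := ha
  have hcont : Continuous fun b : ℝ => min 1 (1 - a + b) :=
    continuous_const.min (by continuity)
  rw [integral_Icc_eq_integral_Ioc, ← intervalIntegral.integral_of_le zero_le_one]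
  have hsplit := intervalIntegral.integral_add_adjacent_intervals
    (hcont.intervalIntegrable (μ := volume) 0 a) (hcont.intervalIntegrable (μ := volume) a 1)
  rw [← hsplit]
  have h1 : ∫ b in (0:ℝ)..a, min 1 (1 - a + b) = ∫ b in (0:ℝ)..a, (1 - a + b) := by
    apply intervalIntegral.integral_congr
    intro b hb
    rw [Set.uIcc_of_le ha0] at hb
    exact min_eq_right (by linarith [hb.2])
  have h2 : ∫ b in a..(1:ℝ), min 1 (1 - a + b) = ∫ b in a..(1:ℝ), (1:ℝ) := by
    apply intervalIntegral.integral_congr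
    intro b hb
    rw [Set.uIcc_of_le ha1] at hb
    exact min_eq_left (by linarith [hb.1])
  rw [h1, h2]
  have h3 : ∫ b in (0:ℝ)..a, (1 - a + b) = (1 - a) * a + a^2/2 := by
    have : (fun b : ℝ => 1 - a + b) = (fun b : ℝ => (1 - a) + b) := by funext b; ring
    rw [this, intervalIntegral.integral_add (intervalIntegrable_const) intervalIntegral.intervalIntegrable_id,
      intervalIntegral.integral_const, integral_id]
    simp; ring
  rw [h3, intervalIntegral.integral_const]
  simp
  ring

lemma mid_volume (a : ℝ) (ha : a ∈ Icc (0:ℝ) 1) :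
    volume {q : ℝ × ℝ | 0 ≤ q.1 ∧ q.1 ≤ 1 ∧ 0 ≤ q.2 ∧ q.2 ≤ 1 ∧ a - q.1 + q.2 ≤ 1}
      = ENNReal.ofReal (1 - a^2/2) := by
  obtain ⟨ha0, ha1⟩ := ha
  rw [Measure.volume_eq_prod, Measure.prod_apply (mid_isClosed a).measurableSet]
  have hslice : (fun b : ℝ => volume (Prod.mk b ⁻¹'
      {q : ℝ × ℝ | 0 ≤ q.1 ∧ q.1 ≤ 1 ∧ 0 ≤ q.2 ∧ q.2 ≤ 1 ∧ a - q.1 + q.2 ≤ 1}))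
      = (Icc (0:ℝ) 1).indicator (fun b => ENNReal.ofReal (min 1 (1 - a + b))) := by
    funext b
    by_cases hb : b ∈ Icc (0:ℝ) 1
    · have : Prod.mk b ⁻¹' {q : ℝ × ℝ | 0 ≤ q.1 ∧ q.1 ≤ 1 ∧ 0 ≤ q.2 ∧ q.2 ≤ 1 ∧ a - q.1 + q.2 ≤ 1}
          = Icc 0 (min 1 (1 - a + b)) := by
        rw [← inner_slice a b]
        ext c
        simp only [mem_preimage, mem_setOf_eq]
        exact ⟨fun h => ⟨h.2.2.1, h.2.2.2.1, h.2.2.2.2⟩, fun h => ⟨hb.1, hb.2, h.1, h.2.1, h.2.2⟩⟩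
      rw [this, Real.volume_Icc, indicator_of_mem hb]
      norm_num
    · have : Prod.mk b ⁻¹' {q : ℝ × ℝ | 0 ≤ q.1 ∧ q.1 ≤ 1 ∧ 0 ≤ q.2 ∧ q.2 ≤ 1 ∧ a - q.1 + q.2 ≤ 1}
          = ∅ := by
        ext c
        simp only [mem_preimage, mem_setOf_eq, mem_empty_iff_false, iff_false]
        intro h
        exact hb ⟨h.1, h.2.1⟩
      rw [this, indicator_of_notMem hb]
      simp
  rw [hslice, lintegral_indicator measurableSet_Icc]
  rw [← ofReal_integral_eq_lintegral_ofReal]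
  · rw [mid_integral a ⟨ha0, ha1⟩]
  · exact (continuous_const.min (by continuity)).integrableOn_Icc.integrable
  · filter_upwards [ae_restrict_mem measurableSet_Icc] with b hb
    simp only [Pi.zero_apply]
    exact le_min zero_le_one (by linarith [hb.1])

def T3 : Set (ℝ × ℝ × ℝ) :=
  {p | 0 ≤ p.1 ∧ p.1 ≤ 1 ∧ 0 ≤ p.2.1 ∧ p.2.1 ≤ 1 ∧ 0 ≤ p.2.2 ∧ p.2.2 ≤ 1 ∧
    p.1 - p.2.1 + p.2.2 ≤ 1}

lemma T3_isClosed : IsClosed T3 := by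
  apply IsClosed.inter (isClosed_le continuous_const continuous_fst)
  apply IsClosed.inter (isClosed_le continuous_fst continuous_const)
  apply IsClosed.inter (isClosed_le continuous_const (continuous_fst.comp continuous_snd))
  apply IsClosed.inter (isClosed_le (continuous_fst.comp continuous_snd) continuous_const)
  apply IsClosed.inter (isClosed_le continuous_const (continuous_snd.comp continuous_snd))
  apply IsClosed.inter (isClosed_le (continuous_snd.comp continuous_snd) continuous_const)
  exact isClosed_le ((continuous_fst.sub (continuous_fst.comp continuous_snd)).add
    (continuous_snd.comp continuous_snd)) continuous_const

lemma T3_volume : volume T3 = ENNReal.ofReal (5/6) := by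
  rw [Measure.volume_eq_prod, Measure.prod_apply T3_isClosed.measurableSet]
  have hslice : (fun a : ℝ => volume (Prod.mk a ⁻¹' T3))
      = (Icc (0:ℝ) 1).indicator (fun a => ENNReal.ofReal (1 - a^2/2)) := by
    funext a
    by_cases ha : a ∈ Icc (0:ℝ) 1
    · have : Prod.mk a ⁻¹' T3
          = {q : ℝ × ℝ | 0 ≤ q.1 ∧ q.1 ≤ 1 ∧ 0 ≤ q.2 ∧ q.2 ≤ 1 ∧ a - q.1 + q.2 ≤ 1} := by
        ext q
        simp only [mem_preimage, T3, mem_setOf_eq]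
        obtain ⟨ha0, ha1⟩ := ha
        tauto
      rw [this, mid_volume a ha, indicator_of_mem ha]
    · have : Prod.mk a ⁻¹' T3 = ∅ := by
        ext q
        simp only [mem_preimage, T3, mem_setOf_eq, mem_empty_iff_false, iff_false]
        intro h
        exact ha ⟨h.1, h.2.1⟩
      rw [this, indicator_of_notMem ha]
      simp
  rw [hslice, lintegral_indicator measurableSet_Icc]
  rw [← ofReal_integral_eq_lintegral_ofReal]
  · congr 1
    rw [integral_Icc_eq_integral_Ioc, ← intervalIntegral.integral_of_le zero_le_one]
    have : (fun a : ℝ => 1 - a^2/2) = (fun a : ℝ => 1 - a^2 * (1/2)) := by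
      funext a; ring
    rw [this]
    rw [intervalIntegral.integral_sub intervalIntegrable_const
      ((intervalIntegral.intervalIntegrable_pow 2).mul_const _)]
    rw [intervalIntegral.integral_mul_const, integral_pow, intervalIntegral.integral_const]
    norm_num
  · exact (by continuity : Continuous fun a : ℝ => 1 - a^2/2).integrableOn_Icc.integrable
  · filter_upwards [ae_restrict_mem measurableSet_Icc] with a ha
    simp only [Pi.zero_apply]
    nlinarith [ha.1, ha.2]

lemma E3_volume : volume E3 = ENNReal.ofReal (5/6) := by
  have hmp : MeasurePreserving
      (fun x : Fin 3 → ℝ => (x 0, (x 1, x 2))) volume volume := by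
    have h1 := volume_preserving_piFinSuccAbove (fun _ : Fin 3 => ℝ) 0
    have h2 := (MeasurePreserving.id (volume : Measure ℝ)).prod
      (volume_preserving_finTwoArrow ℝ)
    have h3 := h2.comp h1
    convert h3 using 1 <;> rfl
  have hpre : E3 = (fun x : Fin 3 → ℝ => (x 0, (x 1, x 2))) ⁻¹' T3 := by
    ext x
    simp only [E3, T3, mem_preimage, mem_setOf_eq]
  rw [hpre, hmp.measure_preimage T3_isClosed.measurableSet.nullMeasurableSet, T3_volume]

lemma E3_convex : Convex ℝ E3 := by
  intro x hx y hy a b ha hb hab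
  obtain ⟨h1, h2, h3, h4, h5, h6, h7⟩ := hx
  obtain ⟨g1, g2, g3, g4, g5, g6, g7⟩ := hy
  simp only [E3, Set.mem_setOf_eq, Pi.add_apply, Pi.smul_apply, smul_eq_mul]
  refine ⟨by nlinarith, by nlinarith, by nlinarith, by nlinarith, by nlinarith, by nlinarith,
    by nlinarith⟩

lemma hull_eq : convexHull ℝ
    ({![0, 0, 0], ![1, 0, 0], ![0, 1, 0], ![0, 0, 1], ![1, 1, 0], ![0, 1, 1], ![1, 1, 1]} :
      Set (Fin 3 → ℝ)) = E3 := by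
  apply le_antisymm
  · apply convexHull_min _ E3_convex
    intro x hx
    simp only [Set.mem_insert_iff, Set.mem_singleton_iff] at hx
    rcases hx with h|h|h|h|h|h|h <;> subst h <;> simp [E3, Set.mem_setOf_eq]
  · exact E3_sub_hull

/-- For type `A₃`: the convex hull of the six positive roots together with the origin
has normalized (integral, i.e. `3! ×` Euclidean) volume `5`. -/
theorem A3_positive_root_polytope_volume :
    6 * volume (convexHull ℝ
        ({![0, 0, 0], ![1, 0, 0], ![0, 1, 0], ![0, 0, 1], ![1, 1, 0], ![0, 1, 1], ![1, 1, 1]} :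
          Set (Fin 3 → ℝ))) = 5 := by
  rw [hull_eq, E3_volume]
  rw [show (6 : ℝ≥0∞) = ENNReal.ofReal 6 by norm_num, ← ENNReal.ofReal_mul (by norm_num : (0:ℝ) ≤ 6)]
  norm_num
end

section
/- For each n ≥ 1, the convex hull of all roots of the root system of type A_n (realized as the vectors e_i + e_{i+1} + ... + e_j and their negatives in R^n, for 1 ≤ i ≤ j ≤ n) has normalized (integral) volume C(2n, n). -/
/-!
Let `Σ` be the partial-sum map `(Σ u)_k = u_0 + ⋯ + u_k` on `ℝⁿ`; it is unimodular. Putting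
`e_n := 0`, it sends `e_i - e_{j+1}` to the root `e_i + ⋯ + e_j`, so the polytope is the image
under `Σ` of the projection, forgetting the last coordinate, of the standard root polytope
`conv {e_a - e_b} = {v ∈ ℝⁿ⁺¹ | ∑ v = 0, ∑ v⁺ ≤ 1}`. That projection is
`{u ∈ ℝⁿ | ∑ u⁺ ≤ 1, ∑ u⁻ ≤ 1}`. Slicing along one coordinate shows that
`{u ∈ ℝᵐ | ∑ u⁺ ≤ s, ∑ u⁻ ≤ t}` has volume `∑_{p+q=m} C(m,p) sᵖ/p! · t^q/q!`, so the normalized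
volume is `∑_p C(n,p)² = C(2n,n)`.
-/

open MeasureTheory

/-- The interval root `e_i + e_{i+1} + ⋯ + e_j` of type `Aₙ`, as a vector in `ℝⁿ`. -/
def intervalRoot (n : ℕ) (i j : Fin n) : Fin n → ℝ :=
  fun k => if i ≤ k ∧ k ≤ j then 1 else 0

open Finset
open scoped Nat

section RootPolytope

variable {ι : Type*} [Fintype ι]

variable (ι) in
def rootPolytope : Set (ι → ℝ) := {v | ∑ i, v i = 0 ∧ ∑ i, (v i)⁺ ≤ 1}

lemma sum_negPart_eq_sum_posPart {v : ι → ℝ} (hv : ∑ i, v i = 0) :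
    ∑ i, (v i)⁻ = ∑ i, (v i)⁺ := by
  have : ∑ i, ((v i)⁺ - (v i)⁻) = ∑ i, v i := by simp only [posPart_sub_negPart]
  rw [sum_sub_distrib, hv] at this
  linarith

lemma convexOn_sum_posPart : ConvexOn ℝ Set.univ fun v : ι → ℝ => ∑ i, (v i)⁺ := by
  refine ⟨convex_univ, fun x _ y _ a b ha hb _ => ?_⟩
  simp only [smul_eq_mul, mul_sum, ← sum_add_distrib, Pi.add_apply, Pi.smul_apply]
  gcongr with i
  exact max_le (by gcongr <;> exact le_posPart _)
    (add_nonneg (mul_nonneg ha (posPart_nonneg _)) (mul_nonneg hb (posPart_nonneg _)))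

lemma convex_rootPolytope : Convex ℝ (rootPolytope ι) := by
  have hsum : IsLinearMap ℝ fun v : ι → ℝ => ∑ i, v i :=
    ⟨fun _ _ => sum_add_distrib, fun _ _ => (mul_sum ..).symm⟩
  simpa [rootPolytope, Set.ofPred_and] using
    (convex_hyperplane hsum 0).inter (convexOn_sum_posPart.convex_le 1)

lemma sum_smul_single_sub_single [DecidableEq ι] {v : ι → ℝ} (hv : ∑ i, v i = 0) :
    ∑ p : ι × ι, ((v p.1)⁺ * (v p.2)⁻) • (Pi.single p.1 1 - Pi.single p.2 1 : ι → ℝ)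
      = (∑ i, (v i)⁺) • v := by
  ext k
  simp only [Finset.sum_apply, Pi.smul_apply, Pi.sub_apply, smul_eq_mul, Fintype.sum_prod_type,
    mul_sub, sum_sub_distrib, Pi.single_apply, mul_ite, mul_one, mul_zero]
  rw [Finset.sum_comm (f := fun x y => if k = y then _ else _)]
  simp only [sum_ite_irrel, ← mul_sum, sum_negPart_eq_sum_posPart hv, sum_const_zero, sum_ite_eq,
    mem_univ, ↓reduceIte, ← sum_mul]
  linear_combination (∑ i, (v i)⁺) * posPart_sub_negPart (v k)

lemma rootPolytope_subset_convexHull [Nonempty ι] [DecidableEq ι] :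
    rootPolytope ι ⊆
      convexHull ℝ (Set.range fun p : ι × ι => (Pi.single p.1 1 - Pi.single p.2 1 : ι → ℝ)) := by
  rintro v ⟨hsum, hpos⟩
  set V := ∑ i, (v i)⁺
  have zero_mem : (0 : ι → ℝ) ∈ convexHull ℝ (Set.range fun p : ι × ι =>
      (Pi.single p.1 1 - Pi.single p.2 1 : ι → ℝ)) :=
    subset_convexHull ℝ _ ⟨(Classical.arbitrary ι, Classical.arbitrary ι), sub_self _⟩
  obtain hV | hV := (sum_nonneg fun i _ => posPart_nonneg (v i)).eq_or_lt
  · have hv : v = 0 := by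
      have hle : ∀ i ∈ univ, v i ≤ 0 := fun i hi =>
        (le_posPart _).trans <| (single_le_sum (fun j _ => posPart_nonneg (v j)) hi).trans hV.ge
      exact funext fun i => (sum_eq_zero_iff_of_nonpos hle).1 hsum i (mem_univ i)
    exact hv ▸ zero_mem
  · have hw : ∑ p : ι × ι, (v p.1)⁺ * (v p.2)⁻ = V * V := by
      rw [Fintype.sum_prod_type, ← sum_mul_sum (f := fun a => (v a)⁺) (g := fun b => (v b)⁻),
        sum_negPart_eq_sum_posPart hsum]
    have hscaled := (univ : Finset (ι × ι)).centerMass_mem_convexHull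
      (z := fun p : ι × ι => (Pi.single p.1 1 - Pi.single p.2 1 : ι → ℝ))
      (fun p _ => mul_nonneg (posPart_nonneg (v p.1)) (negPart_nonneg (v p.2)))
      (hw ▸ mul_pos hV hV) (fun p _ => Set.mem_range_self p)
    rw [centerMass, hw, sum_smul_single_sub_single hsum, smul_smul, mul_inv_rev,
      inv_mul_cancel_right₀ hV.ne'] at hscaled
    have := (convex_convexHull ℝ _).smul_mem_of_zero_mem zero_mem hscaled ⟨hV.le, hpos⟩
    rwa [smul_inv_smul₀ hV.ne'] at this

theorem convexHull_range_single_sub_single [Nonempty ι] [DecidableEq ι] :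
    convexHull ℝ (Set.range fun p : ι × ι => (Pi.single p.1 1 - Pi.single p.2 1 : ι → ℝ))
      = rootPolytope ι := by
  refine le_antisymm (convexHull_min ?_ convex_rootPolytope) rootPolytope_subset_convexHull
  rintro - ⟨⟨a, b⟩, rfl⟩
  refine ⟨by simp [sum_sub_distrib], ?_⟩
  rcases eq_or_ne a b with rfl | hab
  · simp
  · rw [Fintype.sum_eq_single a fun i hi => ?_]
    · simp [hab]
    · by_cases hib : i = b <;> simp [hi, hib, Ne.symm hab]

end RootPolytope

section PartialSum

variable {ι : Type*} [Fintype ι] [LinearOrder ι]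

variable (ι) in
noncomputable def partialSum : (ι → ℝ) →ₗ[ℝ] ι → ℝ :=
  Matrix.toLin' (Matrix.of fun k c => if c ≤ k then 1 else 0)

lemma partialSum_apply (x : ι → ℝ) (k : ι) :
    partialSum ι x k = ∑ c, if c ≤ k then x c else 0 := by
  simp [partialSum, Matrix.mulVec, dotProduct]

lemma det_partialSum : LinearMap.det (partialSum ι) = 1 := by
  rw [partialSum, LinearMap.det_toLin', Matrix.det_of_isLowerTriangular]
  · simp
  · intro i j hij
    simp [not_le.2 (OrderDual.toDual_lt_toDual.1 hij)]

end PartialSum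

noncomputable def cumulativeSum (n : ℕ) : (Fin (n + 1) → ℝ) →ₗ[ℝ] Fin n → ℝ :=
  partialSum (Fin n) ∘ₗ LinearMap.funLeft ℝ ℝ Fin.castSucc

lemma cumulativeSum_single {n : ℕ} (a : Fin (n + 1)) (k : Fin n) :
    cumulativeSum n (Pi.single a 1) k = if a ≤ k.castSucc then 1 else 0 := by
  simp only [cumulativeSum, LinearMap.comp_apply, partialSum_apply, LinearMap.funLeft_apply]
  induction a using Fin.lastCases with
  | last => simp
  | cast a =>
    rw [Fintype.sum_eq_single a fun c hc => by simp [hc]]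
    simp

lemma cumulativeSum_single_sub_single {n : ℕ} {i j : Fin n} (hij : i ≤ j) :
    cumulativeSum n (Pi.single i.castSucc 1 - Pi.single j.succ 1) = intervalRoot n i j := by
  ext k
  simp only [map_sub, Pi.sub_apply, cumulativeSum_single, intervalRoot, Fin.le_def,
    Fin.val_castSucc, Fin.val_succ]
  rw [Fin.le_def] at hij
  split_ifs <;> simp <;> omega

def posNegPolytope (m : ℕ) (s t : ℝ) : Set (Fin m → ℝ) :=
  {u | ∑ k, (u k)⁺ ≤ s ∧ ∑ k, (u k)⁻ ≤ t}

lemma image_funLeft_castSucc_rootPolytope (n : ℕ) :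
    LinearMap.funLeft ℝ ℝ Fin.castSucc '' rootPolytope (Fin (n + 1)) = posNegPolytope n 1 1 := by
  ext u
  constructor
  · rintro ⟨v, ⟨hsum, hpos⟩, rfl⟩
    have hneg := (sum_negPart_eq_sum_posPart hsum).trans_le hpos
    rw [Fin.sum_univ_castSucc] at hpos hneg
    exact ⟨(le_add_of_nonneg_right (posPart_nonneg _)).trans hpos,
      (le_add_of_nonneg_right (negPart_nonneg _)).trans hneg⟩
  · rintro ⟨hpos, hneg⟩
    refine ⟨Fin.snoc u (-∑ k, u k), ⟨by simp [Fin.sum_univ_castSucc], ?_⟩, ?_⟩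
    · have hu : ∑ k, u k = ∑ k, (u k)⁺ - ∑ k, (u k)⁻ := by
        simp only [← sum_sub_distrib, posPart_sub_negPart]
      simp only [Fin.sum_univ_castSucc, Fin.snoc_castSucc, Fin.snoc_last, hu]
      rcases le_total (∑ k, (u k)⁻) (∑ k, (u k)⁺) with h | h
      · rw [posPart_eq_zero.2 (by linarith)]
        linarith
      · rw [posPart_eq_self.2 (by linarith)]
        linarith
    · ext k
      simp

def intervalRoots (n : ℕ) : Set (Fin n → ℝ) :=
  {v | ∃ i j : Fin n, i ≤ j ∧ (v = intervalRoot n i j ∨ v = -intervalRoot n i j)}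

lemma exists_cumulativeSum_single_sub_single_eq_intervalRoot {n : ℕ} {a b : Fin (n + 1)}
    (hab : a < b) :
    ∃ i j, i ≤ j ∧ cumulativeSum n (Pi.single a 1 - Pi.single b 1) = intervalRoot n i j := by
  have ha : (a : ℕ) < n := by omega
  have hb : b ≠ 0 := Fin.ne_zero_of_lt hab
  have hij : a.castLT ha ≤ b.pred hb := by
    rw [Fin.le_def, Fin.val_castLT, Fin.val_pred]
    omega
  refine ⟨a.castLT ha, b.pred hb, hij, ?_⟩
  rw [← cumulativeSum_single_sub_single hij, Fin.castSucc_castLT, Fin.succ_pred]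

lemma zero_mem_convexHull_intervalRoots {n : ℕ} (hn : 1 ≤ n) :
    (0 : Fin n → ℝ) ∈ convexHull ℝ (intervalRoots n) := by
  let i : Fin n := ⟨0, hn⟩
  have hmid := convex_convexHull ℝ (intervalRoots n)
    (subset_convexHull ℝ _ ⟨i, i, le_rfl, Or.inl rfl⟩)
    (subset_convexHull ℝ _ ⟨i, i, le_rfl, Or.inr rfl⟩) one_half_pos.le one_half_pos.le
    (add_halves 1)
  rwa [smul_neg, add_neg_cancel] at hmid

lemma convexHull_intervalRoots {n : ℕ} (hn : 1 ≤ n) :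
    convexHull ℝ (intervalRoots n) = partialSum (Fin n) '' posNegPolytope n 1 1 := by
  rw [← image_funLeft_castSucc_rootPolytope, Set.image_image]
  change _ = cumulativeSum n '' _
  rw [← convexHull_range_single_sub_single, LinearMap.image_convexHull]
  refine le_antisymm (convexHull_mono ?_) (convexHull_min ?_ (convex_convexHull ℝ _))
  · rintro v ⟨i, j, hij, rfl | rfl⟩
    · exact ⟨_, ⟨(i.castSucc, j.succ), rfl⟩, cumulativeSum_single_sub_single hij⟩
    · refine ⟨_, ⟨(j.succ, i.castSucc), rfl⟩, ?_⟩
      rw [← cumulativeSum_single_sub_single hij, ← map_neg, neg_sub]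
  · rintro - ⟨-, ⟨⟨a, b⟩, rfl⟩, rfl⟩
    rcases lt_trichotomy a b with hab | rfl | hba
    · obtain ⟨i, j, hij, h⟩ := exists_cumulativeSum_single_sub_single_eq_intervalRoot hab
      exact subset_convexHull ℝ _ ⟨i, j, hij, Or.inl h⟩
    · simpa using zero_mem_convexHull_intervalRoots hn
    · obtain ⟨i, j, hij, h⟩ := exists_cumulativeSum_single_sub_single_eq_intervalRoot hba
      refine subset_convexHull ℝ _ ⟨i, j, hij, Or.inr ?_⟩
      rw [← h, ← map_neg, neg_sub]

noncomputable def posNegVolume (m : ℕ) (s t : ℝ) : ℝ :=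
  ∑ ij ∈ antidiagonal m, (m.choose ij.1 : ℝ) * (s ^ ij.1 / ij.1 ! * (t ^ ij.2 / ij.2 !))

lemma integral_pow_div_factorial (k : ℕ) (s : ℝ) :
    ∫ x in (0 : ℝ)..s, x ^ k / k ! = s ^ (k + 1) / (k + 1)! := by
  rw [intervalIntegral.integral_div, integral_pow, Nat.factorial_succ]
  push_cast
  field_simp
  ring

lemma posNegVolume_succ (m : ℕ) (s t : ℝ) :
    posNegVolume (m + 1) s t
      = (∫ x in (0 : ℝ)..s, posNegVolume m x t) + ∫ y in (0 : ℝ)..t, posNegVolume m s y := by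
  rw [posNegVolume, sum_antidiagonal_choose_succ_mul (fun i j => s ^ i / i ! * (t ^ j / j !)),
    add_comm]
  simp only [posNegVolume]
  have hint {a b : ℝ} {f : ℝ → ℝ} (hf : Continuous f) : IntervalIntegrable f volume a b :=
    hf.intervalIntegrable a b
  rw [intervalIntegral.integral_finsetSum fun _ _ => hint (by fun_prop),
    intervalIntegral.integral_finsetSum fun _ _ => hint (by fun_prop)]
  congr 1 <;> refine sum_congr rfl fun ij hij => ?_
  · rw [Nat.choose_symm_of_eq_add (mem_antidiagonal.1 hij).symm]
    simp only [intervalIntegral.integral_const_mul, intervalIntegral.integral_mul_const,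
      integral_pow_div_factorial]
  · simp only [intervalIntegral.integral_const_mul, integral_pow_div_factorial]

lemma continuous_posNegVolume_slice (m : ℕ) (s t : ℝ) :
    Continuous fun x : ℝ => posNegVolume m (s - x⁺) (t - x⁻) := by
  unfold posNegVolume
  fun_prop

lemma posNegVolume_nonneg (m : ℕ) {s t : ℝ} (hs : 0 ≤ s) (ht : 0 ≤ t) :
    0 ≤ posNegVolume m s t :=
  sum_nonneg fun _ _ => by positivity

lemma volume_posNegPolytope_succ (m : ℕ) (s t : ℝ) :
    volume (posNegPolytope (m + 1) s t)
      = ∫⁻ x, volume (posNegPolytope m (s - x⁺) (t - x⁻)) := by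
  set A := {z : ℝ × (Fin m → ℝ) | z.2 ∈ posNegPolytope m (s - z.1⁺) (t - z.1⁻)}
  have hA : MeasurableSet A := by
    simp only [A, posNegPolytope, Set.ofPred_and]
    exact (measurableSet_le (by fun_prop) (by fun_prop)).inter
      (measurableSet_le (by fun_prop) (by fun_prop))
  have hpre :
      posNegPolytope (m + 1) s t = MeasurableEquiv.piFinSuccAbove (fun _ => ℝ) 0 ⁻¹' A := by
    ext u
    simp [A, posNegPolytope, Fin.sum_univ_succ, le_sub_iff_add_le', Fin.tail]
  rw [hpre, (volume_preserving_piFinSuccAbove (fun _ : Fin (m + 1) => ℝ) 0).measure_preimage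
    hA.nullMeasurableSet, Measure.volume_eq_prod, Measure.prod_apply hA]
  rfl

lemma posNegPolytope_eq_empty {m : ℕ} {s t : ℝ} (h : s < 0 ∨ t < 0) :
    posNegPolytope m s t = ∅ := by
  refine Set.eq_empty_of_forall_notMem fun u ⟨hs, ht⟩ => ?_
  have := sum_nonneg fun k (_ : k ∈ univ) => posPart_nonneg (u k)
  have := sum_nonneg fun k (_ : k ∈ univ) => negPart_nonneg (u k)
  rcases h with h | h <;> linarith

lemma mem_Icc_iff_posPart_le_and_negPart_le {s t x : ℝ} (hs : 0 ≤ s) (ht : 0 ≤ t) :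
    x ∈ Set.Icc (-t) s ↔ x⁺ ≤ s ∧ x⁻ ≤ t := by
  rw [posPart_def, negPart_def, sup_le_iff, sup_le_iff, Set.mem_Icc, neg_le]
  tauto

lemma integral_posNegVolume_slice (m : ℕ) {s t : ℝ} (hs : 0 ≤ s) (ht : 0 ≤ t) :
    ∫ x in -t..s, posNegVolume m (s - x⁺) (t - x⁻) = posNegVolume (m + 1) s t := by
  have hcont := continuous_posNegVolume_slice m s t
  rw [← intervalIntegral.integral_add_adjacent_intervals (b := 0) (hcont.intervalIntegrable _ _)
    (hcont.intervalIntegrable _ _), posNegVolume_succ, add_comm]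
  congr 1
  · rw [intervalIntegral.integral_congr (g := fun x => posNegVolume m (s - x) t) fun x hx => ?_,
      intervalIntegral.integral_comp_sub_left (fun x => posNegVolume m x t), sub_self, sub_zero]
    rw [Set.uIcc_of_le hs] at hx
    simp [posPart_of_nonneg hx.1, negPart_of_nonneg hx.1]
  · rw [intervalIntegral.integral_congr (g := fun x => posNegVolume m s (t + x)) fun x hx => ?_,
      intervalIntegral.integral_comp_add_left (fun y => posNegVolume m s y), add_neg_cancel,
      add_zero]
    rw [Set.uIcc_of_le (neg_nonpos.2 ht)] at hx
    simp [posPart_of_nonpos hx.2, negPart_of_nonpos hx.2]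

theorem volume_posNegPolytope (m : ℕ) {s t : ℝ} (hs : 0 ≤ s) (ht : 0 ≤ t) :
    volume (posNegPolytope m s t) = ENNReal.ofReal (posNegVolume m s t) := by
  induction m generalizing s t with
  | zero =>
    have : posNegPolytope 0 s t = Set.univ := by ext; simp [posNegPolytope, hs, ht]
    simp [this, posNegVolume, volume_pi]
  | succ m ih =>
    have hslice (x : ℝ) : volume (posNegPolytope m (s - x⁺) (t - x⁻)) = (Set.Icc (-t) s).indicator
        (fun x => ENNReal.ofReal (posNegVolume m (s - x⁺) (t - x⁻))) x := by
      by_cases hx : x ∈ Set.Icc (-t) s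
      · obtain ⟨hxs, hxt⟩ := (mem_Icc_iff_posPart_le_and_negPart_le hs ht).1 hx
        rw [Set.indicator_of_mem hx, ih (sub_nonneg.2 hxs) (sub_nonneg.2 hxt)]
      · rw [Set.indicator_of_notMem hx, posNegPolytope_eq_empty, measure_empty]
        rw [mem_Icc_iff_posPart_le_and_negPart_le hs ht, not_and_or, not_le, not_le] at hx
        rcases hx with h | h <;> [left; right] <;> linarith
    have hnonneg : 0 ≤ᵐ[volume.restrict (Set.Icc (-t) s)]
        fun x => posNegVolume m (s - x⁺) (t - x⁻) := by
      refine (ae_restrict_iff' measurableSet_Icc).2 (ae_of_all _ fun x hx => ?_)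
      obtain ⟨hxs, hxt⟩ := (mem_Icc_iff_posPart_le_and_negPart_le hs ht).1 hx
      exact posNegVolume_nonneg m (sub_nonneg.2 hxs) (sub_nonneg.2 hxt)
    rw [volume_posNegPolytope_succ, funext hslice, lintegral_indicator measurableSet_Icc,
      ← ofReal_integral_eq_lintegral_ofReal
        (continuous_posNegVolume_slice m s t).integrableOn_Icc hnonneg,
      integral_Icc_eq_integral_Ioc, ← intervalIntegral.integral_of_le (by linarith),
      integral_posNegVolume_slice m hs ht]

lemma factorial_mul_posNegVolume_one_one (n : ℕ) :
    (n ! : ℝ) * posNegVolume n 1 1 = (2 * n).choose n := by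
  rw [two_mul, Nat.add_choose_eq, posNegVolume, mul_sum]
  push_cast
  refine sum_congr rfl fun ij hij => ?_
  obtain rfl := mem_antidiagonal.1 hij
  rw [Nat.cast_add_choose, ← Nat.choose_symm_add, Nat.cast_add_choose]
  field_simp
  simp

/-- For `n ≥ 1`, the convex hull of all roots `±(e_i + ⋯ + e_j)` of type `Aₙ` has
normalized (integral, i.e. `n! ×` Euclidean) volume `C(2n, n)`. -/
theorem volume_root_polytope_An (n : ℕ) (hn : 1 ≤ n) :
    (n.factorial : ENNReal) * volume (convexHull ℝ
        {v : Fin n → ℝ | ∃ i j : Fin n, i ≤ j ∧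
          (v = intervalRoot n i j ∨ v = -intervalRoot n i j)})
      = ((2 * n).choose n : ENNReal) := by
  change (n ! : ENNReal) * volume (convexHull ℝ (intervalRoots n)) = _
  rw [convexHull_intervalRoots hn, Measure.addHaar_image_linearMap, det_partialSum, abs_one,
    ENNReal.ofReal_one, one_mul, volume_posNegPolytope n zero_le_one zero_le_one,
    ← ENNReal.ofReal_natCast, ← ENNReal.ofReal_mul (Nat.cast_nonneg _),
    factorial_mul_posNegVolume_one_one, ENNReal.ofReal_natCast]
end

section
/- For each n ≥ 1, the convex hull of the positive roots of type A_n together with the negative standard basis vectors -e_1, ..., -e_n in R^n has normalized (integral) volume equal to the Catalan number C_{n+1} = C(2n+2, n+1)/(n+2). -/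
open MeasureTheory

open Finset intervalIntegral

namespace ClusterAn


/-- valid sign vectors: entries in {-1,0,1}, any two `+1`s separated by a `-1`. -/
def Valid {m : ℕ} (γ : Fin m → ℝ) : Prop :=
  (∀ k, γ k = -1 ∨ γ k = 0 ∨ γ k = 1) ∧
  (∀ i j : Fin m, i < j → γ i = 1 → γ j = 1 → ∃ k, i < k ∧ k < j ∧ γ k = -1)

/-- "minus type": every `+1` is followed by some `-1`. -/
def MinusT {m : ℕ} (γ : Fin m → ℝ) : Prop := ∀ j, γ j = 1 → ∃ k, j < k ∧ γ k = -1

open Classical in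
/-- the H-description region -/
noncomputable def R (m : ℕ) (a b : ℝ) : Set (Fin m → ℝ) :=
  {x | ∀ γ : Fin m → ℝ, Valid γ → (∑ k, γ k * x k) ≤ if MinusT γ then b else a}

lemma sum_snoc_mul {m : ℕ} (γ y : Fin m → ℝ) (σ t : ℝ) :
    (∑ k, (Fin.snoc γ σ : Fin (m+1) → ℝ) k * (Fin.snoc y t : Fin (m+1) → ℝ) k)
      = (∑ k, γ k * y k) + σ * t := by
  rw [Fin.sum_univ_castSucc]
  simp [Fin.snoc_castSucc, Fin.snoc_last]

lemma valid_init {m : ℕ} {γ : Fin (m+1) → ℝ} (h : Valid γ) : Valid (Fin.init γ) := by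
  obtain ⟨h1, h2⟩ := h
  refine ⟨fun k => h1 _, fun i j hij hi hj => ?_⟩
  obtain ⟨k, hk1, hk2, hk3⟩ := h2 i.castSucc j.castSucc (by simpa using hij)
      (by simpa [Fin.init] using hi) (by simpa [Fin.init] using hj)
  have hkl : k < Fin.last m := lt_of_lt_of_le hk2 (Fin.le_last _)
  refine ⟨k.castLT (by simpa [Fin.lt_iff_val_lt_val] using hkl), ?_, ?_, ?_⟩
  · simpa [Fin.lt_iff_val_lt_val] using hk1
  · simpa [Fin.lt_iff_val_lt_val] using hk2
  · simpa [Fin.init] using hk3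

lemma valid_snoc_zero {m : ℕ} {γ : Fin m → ℝ} (h : Valid γ) :
    Valid (Fin.snoc γ (0:ℝ)) := by
  obtain ⟨h1, h2⟩ := h
  constructor
  · intro k
    refine Fin.lastCases ?_ ?_ k
    · simp [Fin.snoc_last]
    · intro k'; simpa [Fin.snoc_castSucc] using h1 k'
  · intro i j hij hi hj
    have hjl : j ≠ Fin.last m := by
      rintro rfl; rw [Fin.snoc_last] at hj; norm_num at hj
    obtain ⟨j', rfl⟩ := Fin.exists_castSucc_eq.mpr hjl
    have hil : i ≠ Fin.last m := by
      rintro rfl; exact absurd (lt_of_le_of_lt (Fin.le_last _) hij) (lt_irrefl _)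
    obtain ⟨i', rfl⟩ := Fin.exists_castSucc_eq.mpr hil
    rw [Fin.snoc_castSucc] at hi hj
    obtain ⟨k, hk1, hk2, hk3⟩ := h2 i' j' (by simpa using hij) hi hj
    exact ⟨k.castSucc, by simpa using hk1, by simpa using hk2,
      by simpa [Fin.snoc_castSucc] using hk3⟩

lemma valid_snoc_neg {m : ℕ} {γ : Fin m → ℝ} (h : Valid γ) :
    Valid (Fin.snoc γ (-1:ℝ)) := by
  obtain ⟨h1, h2⟩ := h
  constructor
  · intro k
    refine Fin.lastCases ?_ ?_ k
    · simp [Fin.snoc_last]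
    · intro k'; simpa [Fin.snoc_castSucc] using h1 k'
  · intro i j hij hi hj
    have hjl : j ≠ Fin.last m := by
      rintro rfl; rw [Fin.snoc_last] at hj; norm_num at hj
    obtain ⟨j', rfl⟩ := Fin.exists_castSucc_eq.mpr hjl
    have hil : i ≠ Fin.last m := by
      rintro rfl; exact absurd (lt_of_le_of_lt (Fin.le_last _) hij) (lt_irrefl _)
    obtain ⟨i', rfl⟩ := Fin.exists_castSucc_eq.mpr hil
    rw [Fin.snoc_castSucc] at hi hj
    obtain ⟨k, hk1, hk2, hk3⟩ := h2 i' j' (by simpa using hij) hi hj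
    exact ⟨k.castSucc, by simpa using hk1, by simpa using hk2,
      by simpa [Fin.snoc_castSucc] using hk3⟩

lemma valid_snoc_one {m : ℕ} {γ : Fin m → ℝ} (h : Valid γ) (hmt : MinusT γ) :
    Valid (Fin.snoc γ (1:ℝ)) := by
  obtain ⟨h1, h2⟩ := h
  constructor
  · intro k
    refine Fin.lastCases ?_ ?_ k
    · simp [Fin.snoc_last]
    · intro k'; simpa [Fin.snoc_castSucc] using h1 k'
  · intro i j hij hi hj
    have hil : i ≠ Fin.last m := by
      rintro rfl; exact absurd (lt_of_le_of_lt (Fin.le_last _) hij) (lt_irrefl _)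
    obtain ⟨i', rfl⟩ := Fin.exists_castSucc_eq.mpr hil
    rw [Fin.snoc_castSucc] at hi
    by_cases hjl : j = Fin.last m
    · subst hjl
      obtain ⟨k, hk1, hk2⟩ := hmt i' hi
      exact ⟨k.castSucc, by simpa using hk1, Fin.castSucc_lt_last _,
        by simpa [Fin.snoc_castSucc] using hk2⟩
    · obtain ⟨j', rfl⟩ := Fin.exists_castSucc_eq.mpr hjl
      rw [Fin.snoc_castSucc] at hj
      obtain ⟨k, hk1, hk2, hk3⟩ := h2 i' j' (by simpa using hij) hi hj
      exact ⟨k.castSucc, by simpa using hk1, by simpa using hk2,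
        by simpa [Fin.snoc_castSucc] using hk3⟩

lemma minusT_snoc_zero_iff {m : ℕ} {γ : Fin m → ℝ} :
    MinusT (Fin.snoc γ (0:ℝ)) ↔ MinusT γ := by
  constructor
  · intro h j hj
    obtain ⟨k, hk1, hk2⟩ := h j.castSucc (by simpa [Fin.snoc_castSucc] using hj)
    have hkl : k ≠ Fin.last m := by
      rintro rfl; rw [Fin.snoc_last] at hk2; norm_num at hk2
    obtain ⟨k', rfl⟩ := Fin.exists_castSucc_eq.mpr hkl
    exact ⟨k', by simpa using hk1, by simpa [Fin.snoc_castSucc] using hk2⟩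
  · intro h j hj
    have hjl : j ≠ Fin.last m := by
      rintro rfl; rw [Fin.snoc_last] at hj; norm_num at hj
    obtain ⟨j', rfl⟩ := Fin.exists_castSucc_eq.mpr hjl
    rw [Fin.snoc_castSucc] at hj
    obtain ⟨k, hk1, hk2⟩ := h j' hj
    exact ⟨k.castSucc, by simpa using hk1, by simpa [Fin.snoc_castSucc] using hk2⟩

lemma minusT_snoc_neg {m : ℕ} {γ : Fin m → ℝ} : MinusT (Fin.snoc γ (-1:ℝ)) := by
  intro j hj
  have hjl : j ≠ Fin.last m := by
    rintro rfl; rw [Fin.snoc_last] at hj; norm_num at hj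
  exact ⟨Fin.last m, lt_of_le_of_ne (Fin.le_last _) hjl, Fin.snoc_last _ _⟩

lemma not_minusT_snoc_one {m : ℕ} {γ : Fin m → ℝ} : ¬ MinusT (Fin.snoc γ (1:ℝ)) := by
  intro h
  obtain ⟨k, hk1, hk2⟩ := h (Fin.last m) (Fin.snoc_last _ _)
  exact absurd (lt_of_lt_of_le hk1 (Fin.le_last _)) (lt_irrefl _)

lemma minusT_init_of_snoc_one {m : ℕ} {γ : Fin m → ℝ}
    (h : Valid (Fin.snoc γ (1:ℝ))) : MinusT γ := by
  intro j hj
  obtain ⟨k, hk1, hk2, hk3⟩ := h.2 j.castSucc (Fin.last m) (Fin.castSucc_lt_last _)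
    (by simpa [Fin.snoc_castSucc] using hj) (Fin.snoc_last _ _)
  have hkl : k ≠ Fin.last m := ne_of_lt hk2
  obtain ⟨k', rfl⟩ := Fin.exists_castSucc_eq.mpr hkl
  exact ⟨k', by simpa using hk1, by simpa [Fin.snoc_castSucc] using hk3⟩


lemma valid_zero {m : ℕ} : Valid (fun _ : Fin m => (0:ℝ)) :=
  ⟨fun _ => Or.inr (Or.inl rfl), fun i j _ hi => by norm_num at hi⟩

lemma minusT_zero {m : ℕ} : MinusT (fun _ : Fin m => (0:ℝ)) := by
  intro j hj; norm_num at hj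

open Classical in
lemma mem_R_snoc_iff {m : ℕ} (a b t : ℝ) (y : Fin m → ℝ) :
    ((Fin.snoc y t : Fin (m+1) → ℝ) ∈ R (m+1) a b) ↔
      (-b ≤ t ∧ t ≤ a ∧ y ∈ R m (min a (b+t)) (min b (min (a-t) (b+t)))) := by
  constructor
  · intro h
    have ht1 : t ≤ a := by
      have := h (Fin.snoc (fun _ => 0) 1) (valid_snoc_one valid_zero minusT_zero)
      rw [sum_snoc_mul, if_neg not_minusT_snoc_one] at this
      simpa using this
    have ht2 : -b ≤ t := by
      have := h (Fin.snoc (fun _ => 0) (-1)) (valid_snoc_neg valid_zero)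
      rw [sum_snoc_mul, if_pos minusT_snoc_neg] at this
      simp only [zero_mul, Finset.sum_const_zero, zero_add] at this
      linarith
    refine ⟨ht2, ht1, ?_⟩
    intro γ' hγ'
    have h0 := h (Fin.snoc γ' 0) (valid_snoc_zero hγ')
    rw [sum_snoc_mul, zero_mul, add_zero] at h0
    have hneg := h (Fin.snoc γ' (-1)) (valid_snoc_neg hγ')
    rw [sum_snoc_mul, if_pos minusT_snoc_neg] at hneg
    by_cases hmt : MinusT γ'
    · have h1 := h (Fin.snoc γ' 1) (valid_snoc_one hγ' hmt)
      rw [sum_snoc_mul, if_neg not_minusT_snoc_one, one_mul] at h1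
      rw [if_pos hmt]
      rw [if_pos (minusT_snoc_zero_iff.mpr hmt)] at h0
      refine le_min h0 (le_min (by linarith) (by linarith))
    · rw [if_neg hmt]
      rw [if_neg (fun hc => hmt (minusT_snoc_zero_iff.mp hc))] at h0
      refine le_min h0 (by linarith)
  · rintro ⟨ht2, ht1, hy⟩
    intro γ hγ
    have e : Fin.snoc (Fin.init γ) (γ (Fin.last m)) = γ := Fin.snoc_init_self γ
    rw [← e] at hγ ⊢
    have hv' : Valid (Fin.init γ) := by
      have := valid_init hγ
      rwa [Fin.init_snoc] at this
    have hy' := hy (Fin.init γ) hv'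
    rcases hγ.1 (Fin.last m) with hσ | hσ | hσ <;>
      rw [Fin.snoc_last] at hσ <;> rw [hσ, sum_snoc_mul]
    · rw [if_pos minusT_snoc_neg]
      have hb : (∑ k, Fin.init γ k * y k) ≤ b + t := by
        by_cases hmt : MinusT (Fin.init γ)
        · rw [if_pos hmt] at hy'
          exact le_trans hy' (le_trans (min_le_right _ _) (min_le_right _ _))
        · rw [if_neg hmt] at hy'
          exact le_trans hy' (min_le_right _ _)
      linarith
    · have hiff : MinusT (Fin.snoc (Fin.init γ) (0:ℝ)) ↔ MinusT (Fin.init γ) :=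
        minusT_snoc_zero_iff
      by_cases hmt : MinusT (Fin.init γ)
      · rw [if_pos (hiff.mpr hmt)]
        rw [if_pos hmt] at hy'
        have := le_trans hy' (min_le_left _ _)
        linarith
      · rw [if_neg (fun hc => hmt (hiff.mp hc))]
        rw [if_neg hmt] at hy'
        have := le_trans hy' (min_le_left _ _)
        linarith
    · rw [if_neg not_minusT_snoc_one]
      have hmt : MinusT (Fin.init γ) := minusT_init_of_snoc_one (hσ ▸ hγ)
      rw [if_pos hmt] at hy'
      have := le_trans hy' (le_trans (min_le_right _ _) (min_le_left _ _))
      linarith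

/-- ℕ-extension of a sign vector -/
noncomputable def gext {m : ℕ} (γ : Fin m → ℝ) : ℕ → ℝ :=
  fun k => if h : k < m then γ ⟨k, h⟩ else 0

lemma gext_cases {m : ℕ} {γ : Fin m → ℝ} (hγ : Valid γ) (k : ℕ) :
    gext γ k = -1 ∨ gext γ k = 0 ∨ gext γ k = 1 := by
  unfold gext; split
  · exact hγ.1 _
  · exact Or.inr (Or.inl rfl)

lemma window_sum_aux {m : ℕ} {γ : Fin m → ℝ} (hγ : Valid γ) :
    ∀ d l N : ℕ, N ≤ l + d → (∑ k ∈ Finset.Ico l N, gext γ k) ≤ 1 := by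
  intro d
  induction d using Nat.strong_induction_on with
  | _ d ih =>
    intro l N hN
    rcases Nat.lt_or_ge l N with hlN | hlN
    swap
    · rw [Finset.Ico_eq_empty (by omega)]; simp
    have hd : 0 < d := by omega
    rw [Finset.sum_eq_sum_Ico_succ_bot hlN]
    rcases gext_cases hγ l with hl | hl | hl
    · have := ih (d-1) (by omega) (l+1) N (by omega)
      linarith
    · have := ih (d-1) (by omega) (l+1) N (by omega)
      linarith
    -- g l = 1
    have hlm : l < m := by
      by_contra hc
      unfold gext at hl; rw [dif_neg hc] at hl; norm_num at hl
    by_cases hex : ∃ k, l < k ∧ k < N ∧ gext γ k = -1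
    · set k₀ := Nat.find hex with hk₀def
      obtain ⟨hk₀l, hk₀N, hk₀v⟩ := Nat.find_spec hex
      have hmin : ∀ q, q < k₀ → ¬(l < q ∧ q < N ∧ gext γ q = -1) := fun q hq => Nat.find_min hex hq
      have hmid : ∀ q, l < q → q < k₀ → gext γ q = 0 := by
        intro q hq1 hq2
        rcases gext_cases hγ q with h | h | h
        · exact absurd ⟨hq1, by omega, h⟩ (hmin q hq2)
        · exact h
        · -- a second +1 : validity gives a -1 strictly between l and q
          have hqm : q < m := by
            by_contra hc
            unfold gext at h; rw [dif_neg hc] at h; norm_num at h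
          have hql : (⟨l, hlm⟩ : Fin m) < ⟨q, hqm⟩ := by
            simp [Fin.lt_iff_val_lt_val]; omega
          obtain ⟨r, hr1, hr2, hr3⟩ := hγ.2 ⟨l, hlm⟩ ⟨q, hqm⟩ hql
            (by simpa [gext, dif_pos hlm] using hl) (by simpa [gext, dif_pos hqm] using h)
          simp only [Fin.lt_def, Fin.val_mk] at hr1 hr2
          have : gext γ r.val = -1 := by simp [gext, r.isLt, Fin.eta, hr3]
          exact absurd ⟨by omega, by omega, this⟩ (hmin r.val (by omega))
      have hsplit : (∑ k ∈ Finset.Ico (l+1) N, gext γ k)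
          = (∑ k ∈ Finset.Ico (l+1) (k₀+1), gext γ k) + ∑ k ∈ Finset.Ico (k₀+1) N, gext γ k := by
        rw [Finset.sum_Ico_consecutive _ (by omega) (by omega)]
      have hmidsum : (∑ k ∈ Finset.Ico (l+1) (k₀+1), gext γ k) = -1 := by
        rw [Finset.sum_Ico_succ_top (by omega : l+1 ≤ k₀), hk₀v]
        have : (∑ k ∈ Finset.Ico (l+1) k₀, gext γ k) = 0 :=
          Finset.sum_eq_zero fun q hq => by
            rw [Finset.mem_Ico] at hq; exact hmid q (by omega) hq.2
        rw [this]; ring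
      have htail := ih (d-1) (by omega) (k₀+1) N (by omega)
      rw [hsplit, hmidsum, hl]
      linarith
    · push_neg at hex
      have : (∑ k ∈ Finset.Ico (l+1) N, gext γ k) = 0 := by
        refine Finset.sum_eq_zero fun q hq => ?_
        rw [Finset.mem_Ico] at hq
        rcases gext_cases hγ q with h | h | h
        · exact absurd h (hex q (by omega) (by omega))
        · exact h
        · have hqm : q < m := by
            by_contra hc
            unfold gext at h; rw [dif_neg hc] at h; norm_num at h
          have hql : (⟨l, hlm⟩ : Fin m) < ⟨q, hqm⟩ := by
            simp [Fin.lt_iff_val_lt_val]; omega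
          obtain ⟨r, hr1, hr2, hr3⟩ := hγ.2 ⟨l, hlm⟩ ⟨q, hqm⟩ hql
            (by simpa [gext, dif_pos hlm] using hl) (by simpa [gext, dif_pos hqm] using h)
          simp only [Fin.lt_def, Fin.val_mk] at hr1 hr2
          have hneg : gext γ r.val = -1 := by simp [gext, r.isLt, Fin.eta, hr3]
          exact absurd hneg (hex r.val (by omega) (by omega))
      rw [this, hl]; norm_num
  
lemma window_sum {m : ℕ} {γ : Fin m → ℝ} (hγ : Valid γ) (l N : ℕ) :
    (∑ k ∈ Finset.Ico l N, gext γ k) ≤ 1 :=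
  window_sum_aux hγ N l N (by omega)

lemma root_bound {m : ℕ} {γ : Fin m → ℝ} (hγ : Valid γ) (i j : Fin m) :
    (∑ k, γ k * intervalRoot m i j k) ≤ 1 := by
  have key : (∑ k, γ k * intervalRoot m i j k)
      = ∑ k ∈ Finset.Ico (i:ℕ) ((j:ℕ)+1), gext γ k := by
    have h1 : (∑ k, γ k * intervalRoot m i j k)
        = ∑ k ∈ Finset.range m,
            (if (i:ℕ) ≤ k ∧ k ≤ (j:ℕ) then gext γ k else 0) := by
      rw [← Fin.sum_univ_eq_sum_range (fun k =>
        (if (i:ℕ) ≤ k ∧ k ≤ (j:ℕ) then gext γ k else 0)) m]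
      refine Finset.sum_congr rfl fun k _ => ?_
      unfold intervalRoot gext
      rw [dif_pos k.isLt, Fin.eta]
      simp only [Fin.le_def]
      by_cases h : (i:ℕ) ≤ (k:ℕ) ∧ (k:ℕ) ≤ (j:ℕ)
      · rw [if_pos h, if_pos h, mul_one]
      · rw [if_neg h, if_neg h, mul_zero]
    rw [h1, Finset.sum_ite, Finset.sum_const_zero, add_zero]
    apply Finset.sum_congr _ (fun _ _ => rfl)
    ext k
    simp only [Finset.mem_filter, Finset.mem_range, Finset.mem_Ico, Nat.lt_succ_iff]
    constructor
    · rintro ⟨_, h2, h3⟩; exact ⟨h2, h3⟩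
    · rintro ⟨h2, h3⟩; exact ⟨by have := j.isLt; omega, h2, h3⟩
  rw [key]
  exact window_sum hγ _ _

def gen (n : ℕ) : Set (Fin n → ℝ) :=
  {v : Fin n → ℝ | ∃ i j : Fin n, i ≤ j ∧ v = intervalRoot n i j} ∪
  {v : Fin n → ℝ | ∃ i : Fin n, v = -fun k => if k = i then (1:ℝ) else 0}

noncomputable def P (n : ℕ) : Set (Fin n → ℝ) := convexHull ℝ (gen n)

def Stair (m : ℕ) : Set (Fin m → ℝ) :=
  {z | (∀ k, 0 ≤ z k) ∧ (∀ k, z k ≤ 1) ∧ ∀ j k : Fin m, j ≤ k → z j ≤ z k}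

lemma zero_mem_stair (m : ℕ) : (fun _ => (0:ℝ)) ∈ Stair m :=
  ⟨fun _ => le_refl _, fun _ => by norm_num, fun _ _ _ => le_refl _⟩

lemma root_mem {n : ℕ} {i j : Fin n} (hij : i ≤ j) : intervalRoot n i j ∈ P n :=
  subset_convexHull ℝ _ (Or.inl ⟨i, j, hij, rfl⟩)

lemma neg_mem {n : ℕ} (i : Fin n) : (-fun k => if k = i then (1:ℝ) else 0) ∈ P n :=
  subset_convexHull ℝ _ (Or.inr ⟨i, rfl⟩)

lemma P_nonempty (n : ℕ) (hn : 1 ≤ n) : (P n).Nonempty := by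
  obtain ⟨m, rfl⟩ := Nat.exists_eq_add_of_le hn
  exact ⟨_, neg_mem (⟨0, by omega⟩ : Fin (1+m))⟩

lemma P_convex (n : ℕ) : Convex ℝ (P n) := convex_convexHull ℝ _

-- snoc algebra
lemma snoc_add {m : ℕ} (y y' : Fin m → ℝ) (t t' : ℝ) :
    (Fin.snoc y t : Fin (m+1) → ℝ) + Fin.snoc y' t' = Fin.snoc (y + y') (t + t') := by
  funext k
  refine Fin.lastCases ?_ ?_ k <;> simp [Fin.snoc_castSucc, Fin.snoc_last]

lemma snoc_smul {m : ℕ} (c : ℝ) (y : Fin m → ℝ) (t : ℝ) :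
    c • (Fin.snoc y t : Fin (m+1) → ℝ) = Fin.snoc (c • y) (c * t) := by
  funext k
  refine Fin.lastCases ?_ ?_ k <;> simp [Fin.snoc_castSucc, Fin.snoc_last]

lemma neg_e_last (m : ℕ) :
    (Fin.snoc (fun _ => (0:ℝ)) (-1) : Fin (m+1) → ℝ)
      = -fun k => if k = Fin.last m then (1:ℝ) else 0 := by
  funext k
  refine Fin.lastCases ?_ ?_ k
  · simp [Fin.snoc_last]
  · intro k'
    have : k'.castSucc ≠ Fin.last m := (Fin.castSucc_lt_last k').ne
    simp [Fin.snoc_castSucc, this]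

lemma snoc_zero_mem_P {m : ℕ} {y : Fin m → ℝ} (hy : y ∈ P m) :
    (Fin.snoc y 0 : Fin (m+1) → ℝ) ∈ P (m+1) := by
  let L : (Fin m → ℝ) →ₗ[ℝ] (Fin (m+1) → ℝ) :=
    { toFun := fun y => Fin.snoc y 0
      map_add' := fun y y' => by rw [snoc_add, add_zero]
      map_smul' := fun c y => by rw [RingHom.id_apply, snoc_smul, mul_zero] }
  have hsub : P m ⊆ L ⁻¹' (P (m+1)) := by
    apply convexHull_min ?_ ((P_convex (m+1)).linear_preimage L)
    rintro v (⟨i, j, hij, rfl⟩ | ⟨i, rfl⟩)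
    · have : L (intervalRoot m i j) = intervalRoot (m+1) i.castSucc j.castSucc := by
        funext k
        refine Fin.lastCases ?_ ?_ k
        · show (Fin.snoc _ 0 : Fin (m+1) → ℝ) _ = _
          rw [Fin.snoc_last]
          have : ¬(Fin.last m ≤ j.castSucc) := not_le.mpr (Fin.castSucc_lt_last j)
          simp [intervalRoot, this]
        · intro k'
          show (Fin.snoc _ 0 : Fin (m+1) → ℝ) _ = _
          rw [Fin.snoc_castSucc]
          simp only [intervalRoot, Fin.castSucc_le_castSucc_iff]
      exact Set.mem_preimage.mpr (this ▸ root_mem (by simpa using hij))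
    · have : L (-fun k => if k = i then (1:ℝ) else 0)
          = -fun k => if k = i.castSucc then (1:ℝ) else 0 := by
        funext k
        refine Fin.lastCases ?_ ?_ k
        · show (Fin.snoc _ 0 : Fin (m+1) → ℝ) _ = _
          rw [Fin.snoc_last]
          have : Fin.last m ≠ i.castSucc := (Fin.castSucc_lt_last i).ne'
          simp [this]
        · intro k'
          show (Fin.snoc _ 0 : Fin (m+1) → ℝ) _ = _
          rw [Fin.snoc_castSucc]
          simp [Fin.castSucc_inj]
      exact Set.mem_preimage.mpr (this ▸ neg_mem i.castSucc)
  exact hsub hy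



/-- ℕ-extension of a staircase, with value 1 beyond the end -/
noncomputable def uext {m : ℕ} (z : Fin m → ℝ) : ℕ → ℝ :=
  fun k => if h : k < m then z ⟨k, h⟩ else 1

noncomputable def wext {m : ℕ} (z : Fin m → ℝ) : ℕ → ℝ :=
  fun k => if k = 0 then uext z 0 else uext z k - uext z (k-1)

lemma psum_wext {m : ℕ} (z : Fin m → ℝ) :
    ∀ K, (∑ i ∈ Finset.range (K+1), wext z i) = uext z K := by
  intro K
  induction K with
  | zero => simp [wext]
  | succ K ih =>
    rw [Finset.sum_range_succ, ih]
    have hstep : wext z (K+1) = uext z (K+1) - uext z K := by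
      unfold wext
      rw [if_neg (Nat.succ_ne_zero K), Nat.add_sub_cancel]
    rw [hstep]; ring

lemma uext_mono {m : ℕ} {z : Fin m → ℝ} (hz : z ∈ Stair m) :
    ∀ k l, k ≤ l → uext z k ≤ uext z l := by
  intro k l hkl
  unfold uext
  by_cases hk : k < m <;> by_cases hl : l < m
  · rw [dif_pos hk, dif_pos hl]
    exact hz.2.2 _ _ (by simpa [Fin.le_def] using hkl)
  · rw [dif_pos hk, dif_neg hl]; exact hz.2.1 _
  · omega
  · rw [dif_neg hk, dif_neg hl]

lemma snoc_one_mem_P {m : ℕ} {z : Fin m → ℝ} (hz : z ∈ Stair m) :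
    (Fin.snoc z 1 : Fin (m+1) → ℝ) ∈ P (m+1) := by
  classical
  set w : Fin (m+1) → ℝ := fun i => wext z i.val with hw
  set q : Fin (m+1) → (Fin (m+1) → ℝ) := fun i => intervalRoot (m+1) i (Fin.last m) with hq
  have hwnn : ∀ i : Fin (m+1), 0 ≤ w i := by
    intro i
    simp only [hw, wext]
    split
    · simp only [uext]
      split
      · exact hz.1 _
      · norm_num
    · have := uext_mono hz (i.val - 1) i.val (by omega)
      linarith
  have hwsum : (∑ i : Fin (m+1), w i) = 1 := by
    rw [Fin.sum_univ_eq_sum_range (fun i => wext z i) (m+1), psum_wext]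
    simp [uext]
  have hcoord : (∑ i : Fin (m+1), w i • q i) = Fin.snoc z 1 := by
    funext k
    rw [Finset.sum_apply]
    have hqik : ∀ i : Fin (m+1), (w i • q i) k = if (i:ℕ) ≤ (k:ℕ) then wext z i.val else 0 := by
      intro i
      simp only [Pi.smul_apply, hq, intervalRoot, smul_eq_mul]
      by_cases h : i ≤ k
      · rw [if_pos ⟨h, Fin.le_last _⟩, if_pos (by exact_mod_cast h), mul_one]
      · rw [if_neg (fun hc => h hc.1), if_neg (fun hc => h (by exact_mod_cast hc)), mul_zero]
    rw [Finset.sum_congr rfl (fun i _ => hqik i)]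
    rw [Fin.sum_univ_eq_sum_range (fun i => if i ≤ (k:ℕ) then wext z i else 0) (m+1)]
    rw [Finset.sum_ite, Finset.sum_const_zero, add_zero]
    have hfil : (Finset.range (m+1)).filter (fun i => i ≤ (k:ℕ)) = Finset.range ((k:ℕ)+1) := by
      ext i
      simp only [Finset.mem_filter, Finset.mem_range, Nat.lt_succ_iff]
      constructor
      · rintro ⟨_, h2⟩; exact h2
      · intro h2; exact ⟨by have := k.isLt; omega, h2⟩
    rw [hfil, psum_wext]
    refine Fin.lastCases ?_ ?_ k
    · simp [uext, Fin.snoc_last]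
    · intro k'
      rw [Fin.snoc_castSucc]
      simp only [Fin.coe_castSucc, uext, dif_pos k'.isLt, Fin.eta]
  have hmem : ∀ i : Fin (m+1), q i ∈ gen (m+1) := fun i => Or.inl ⟨i, Fin.last m, Fin.le_last _, rfl⟩
  have := Finset.centerMass_mem_convexHull (Finset.univ : Finset (Fin (m+1)))
    (fun i _ => hwnn i) (by rw [hwsum]; norm_num) (fun i _ => hmem i)
  rwa [Finset.centerMass_eq_of_sum_1 _ _ hwsum, hcoord] at this



lemma smul_mem_stair {m : ℕ} {z : Fin m → ℝ} (hz : z ∈ Stair m) {c : ℝ}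
    (h0 : 0 ≤ c) (h1 : c ≤ 1) : c • z ∈ Stair m := by
  refine ⟨fun k => mul_nonneg h0 (hz.1 k), fun k => ?_, fun j k hjk => ?_⟩
  · calc c * z k ≤ 1 * 1 := mul_le_mul h1 (hz.2.1 k) (hz.1 k) (by norm_num)
    _ = 1 := by norm_num
  · exact mul_le_mul_of_nonneg_left (hz.2.2 j k hjk) h0

lemma snoc_mem_stair {m : ℕ} {z : Fin m → ℝ} (hz : z ∈ Stair m) {τ : ℝ}
    (h0 : 0 ≤ τ) (h1 : τ ≤ 1) (hup : ∀ k, z k ≤ τ) :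
    (Fin.snoc z τ : Fin (m+1) → ℝ) ∈ Stair (m+1) := by
  refine ⟨fun k => ?_, fun k => ?_, fun j k hjk => ?_⟩
  · refine Fin.lastCases ?_ ?_ k
    · rw [Fin.snoc_last]; exact h0
    · intro k'; rw [Fin.snoc_castSucc]; exact hz.1 k'
  · refine Fin.lastCases ?_ ?_ k
    · rw [Fin.snoc_last]; exact h1
    · intro k'; rw [Fin.snoc_castSucc]; exact le_trans (hup k') h1
  · revert hjk
    refine Fin.lastCases ?_ ?_ k
    · intro _
      rw [Fin.snoc_last]
      refine Fin.lastCases ?_ ?_ j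
      · rw [Fin.snoc_last]
      · intro j'; rw [Fin.snoc_castSucc]; exact hup j'
    · intro k' hjk'
      have hjne : j ≠ Fin.last m := by
        rintro rfl
        have := lt_of_le_of_lt hjk' (Fin.castSucc_lt_last k')
        exact absurd this (lt_irrefl _)
      obtain ⟨j', rfl⟩ := Fin.exists_castSucc_eq.mpr hjne
      rw [Fin.snoc_castSucc, Fin.snoc_castSucc]
      exact hz.2.2 j' k' (Fin.castSucc_le_castSucc_iff.mp hjk')

lemma valid_one1 : Valid (fun _ : Fin 1 => (1:ℝ)) := by
  refine ⟨fun _ => Or.inr (Or.inr rfl), fun i j hij _ _ => ?_⟩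
  rw [Fin.lt_iff_val_lt_val] at hij
  omega

lemma valid_negone1 : Valid (fun _ : Fin 1 => (-1:ℝ)) := by
  refine ⟨fun _ => Or.inl rfl, fun i j _ hi _ => ?_⟩
  norm_num at hi

lemma not_minusT_one1 : ¬ MinusT (fun _ : Fin 1 => (1:ℝ)) := by
  intro h
  obtain ⟨k, hk1, _⟩ := h 0 rfl
  rw [Fin.lt_iff_val_lt_val] at hk1
  omega

lemma minusT_negone1 : MinusT (fun _ : Fin 1 => (-1:ℝ)) := by
  intro j hj; norm_num at hj

theorem master : ∀ m, 1 ≤ m → ∀ a b : ℝ, 0 ≤ b → b ≤ a → ∀ x ∈ R m a b,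
    ∃ p ∈ P m, ∃ s ∈ Stair m, x = b • p + (a-b) • s := by
  intro m hm
  induction m, hm using Nat.le_induction with
  | base =>
    intro a b hb hba x hx
    have h1 : x 0 ≤ a := by
      have := hx (fun _ => 1) valid_one1
      rw [if_neg not_minusT_one1] at this
      simpa using this
    have h2 : -b ≤ x 0 := by
      have := hx (fun _ => -1) valid_negone1
      rw [if_pos minusT_negone1] at this
      simp only [neg_one_mul, Fin.sum_univ_one] at this
      linarith
    by_cases hab : a + b = 0
    · have hb0 : b = 0 := by linarith
      have ha0 : a = 0 := by linarith
      have hx0 : x 0 = 0 := le_antisymm (ha0 ▸ h1) (by linarith)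
      refine ⟨intervalRoot 1 0 0, root_mem (le_refl _), (fun _ => 0), zero_mem_stair 1, ?_⟩
      funext k
      have hk : k = 0 := Subsingleton.elim _ _
      rw [hk]
      simp [hx0, hb0, ha0]
    · have habpos : 0 < a + b := lt_of_le_of_ne (by linarith) (Ne.symm hab)
      set lam := (x 0 + b) / (a + b) with hlam
      have hl0 : 0 ≤ lam := div_nonneg (by linarith) (by linarith)
      have hl1 : lam ≤ 1 := (div_le_one habpos).mpr (by linarith)
      have hroot : intervalRoot 1 0 0 = fun _ : Fin 1 => (1:ℝ) := by
        funext k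
        have hk : k = 0 := Subsingleton.elim _ _
        rw [hk]
        simp [intervalRoot]
      have hnege : (-fun k : Fin 1 => if k = 0 then (1:ℝ) else 0) = fun _ : Fin 1 => (-1:ℝ) := by
        funext k
        have hk : k = 0 := Subsingleton.elim _ _
        rw [hk]
        simp
      have hpmem : (fun _ : Fin 1 => 2*lam - 1) ∈ P 1 := by
        have := (P_convex 1) (root_mem (le_refl (0 : Fin 1))) (neg_mem 0) hl0
          (by linarith : (0:ℝ) ≤ 1 - lam) (by ring)
        rw [hroot, hnege] at this
        convert this using 1
        funext k
        simp only [Pi.add_apply, Pi.smul_apply, smul_eq_mul]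
        ring
      refine ⟨(fun _ : Fin 1 => 2*lam - 1), hpmem, (fun _ : Fin 1 => lam),
        ⟨fun _ => hl0, fun _ => hl1, fun _ _ _ => le_refl _⟩, ?_⟩
      funext k
      have hk : k = 0 := Subsingleton.elim _ _
      rw [hk]
      simp only [Pi.add_apply, Pi.smul_apply, smul_eq_mul]
      have hlm : lam * (a + b) = x 0 + b := div_mul_cancel₀ _ hab
      linarith [hlm]
  | succ m hm ih =>
    intro a b hb hba x hx
    set t := x (Fin.last m) with htdef
    set y := Fin.init x with hydef
    have hsnoc : (Fin.snoc y t : Fin (m+1) → ℝ) = x := Fin.snoc_init_self x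
    obtain ⟨ht1, ht2, hy⟩ := (mem_R_snoc_iff a b t y).mp (by rw [hsnoc]; exact hx)
    rcases le_or_gt t 0 with hcase | hcase
    · -- t ≤ 0
      have he1 : min a (b+t) = b+t := min_eq_right (by linarith)
      have he2 : min b (min (a-t) (b+t)) = b+t := by
        rw [min_eq_right (by linarith : b+t ≤ a-t), min_eq_right (by linarith : b+t ≤ b)]
      rw [he1, he2] at hy
      obtain ⟨p', hp', s', hs', hy'⟩ := ih (b+t) (b+t) (by linarith) (le_refl _) y hy
      have hy2 : ∀ k', y k' = (b+t) * p' k' := by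
        intro k'; rw [hy']; simp
      by_cases hb0 : b = 0
      · have ht0 : t = 0 := le_antisymm hcase (by rw [hb0] at ht1; linarith)
        refine ⟨Fin.snoc p' 0, snoc_zero_mem_P hp', (fun _ => 0), zero_mem_stair _, ?_⟩
        funext k
        rw [← hsnoc]
        refine Fin.lastCases ?_ ?_ k
        · simp only [Pi.add_apply, Pi.smul_apply, smul_eq_mul, Fin.snoc_last, mul_zero]
          rw [ht0]; ring
        · intro k'
          simp only [Pi.add_apply, Pi.smul_apply, smul_eq_mul, Fin.snoc_castSucc, mul_zero]
          rw [hy2 k', hb0, ht0]; ring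
      · have hbpos : 0 < b := lt_of_le_of_ne hb (Ne.symm hb0)
        have hnegmem : (Fin.snoc (fun _ => (0:ℝ)) (-1) : Fin (m+1) → ℝ) ∈ P (m+1) := by
          rw [neg_e_last]; exact neg_mem _
        have hpmem : ((b+t)/b) • (Fin.snoc p' 0 : Fin (m+1) → ℝ)
            + (-t/b) • (Fin.snoc (fun _ => (0:ℝ)) (-1) : Fin (m+1) → ℝ) ∈ P (m+1) := by
          refine (P_convex (m+1)) (snoc_zero_mem_P hp') hnegmem
            (div_nonneg (by linarith) hb) (div_nonneg (by linarith) hb) ?_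
          field_simp
          ring
        refine ⟨_, hpmem, (fun _ => 0), zero_mem_stair _, ?_⟩
        funext k
        rw [← hsnoc]
        refine Fin.lastCases ?_ ?_ k
        · simp only [Pi.add_apply, Pi.smul_apply, smul_eq_mul, Fin.snoc_last, mul_zero,
            mul_neg, mul_one, add_zero]
          field_simp
          ring
        · intro k'
          simp only [Pi.add_apply, Pi.smul_apply, smul_eq_mul, Fin.snoc_castSucc, mul_zero,
            add_zero]
          rw [hy2 k']
          field_simp
          try ring
    · rcases le_or_gt t (a-b) with hcase2 | hcase2
      · -- 0 < t ≤ a - b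
        have hcpos : 0 < a - b := lt_of_lt_of_le hcase hcase2
        have hne : a - b ≠ 0 := ne_of_gt hcpos
        have he1 : min a (b+t) = b+t := min_eq_right (by linarith)
        have he2 : min b (min (a-t) (b+t)) = b :=
          min_eq_left (le_min (by linarith) (by linarith))
        rw [he1, he2] at hy
        obtain ⟨p', hp', s', hs', hy'⟩ := ih (b+t) b hb (by linarith) y hy
        have hy2 : ∀ k', y k' = b * p' k' + t * s' k' := by
          intro k'
          rw [hy']
          simp only [Pi.add_apply, Pi.smul_apply, smul_eq_mul]
          ring
        have hτ0 : 0 ≤ t/(a-b) := div_nonneg (by linarith) (by linarith)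
        have hτ1 : t/(a-b) ≤ 1 := (div_le_one hcpos).mpr hcase2
        have hsmem : (Fin.snoc ((t/(a-b)) • s') (t/(a-b)) : Fin (m+1) → ℝ) ∈ Stair (m+1) := by
          refine snoc_mem_stair (smul_mem_stair hs' hτ0 hτ1) hτ0 hτ1 ?_
          intro k
          simp only [Pi.smul_apply, smul_eq_mul]
          calc t/(a-b) * s' k ≤ t/(a-b) * 1 := mul_le_mul_of_nonneg_left (hs'.2.1 k) hτ0
          _ = t/(a-b) := mul_one _
        refine ⟨Fin.snoc p' 0, snoc_zero_mem_P hp', _, hsmem, ?_⟩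
        funext k
        rw [← hsnoc]
        refine Fin.lastCases ?_ ?_ k
        · simp only [Pi.add_apply, Pi.smul_apply, smul_eq_mul, Fin.snoc_last, mul_zero, zero_add]
          field_simp
        · intro k'
          simp only [Pi.add_apply, Pi.smul_apply, smul_eq_mul, Fin.snoc_castSucc, mul_zero,
            add_zero]
          rw [hy2 k']
          field_simp
          try ring
      · -- a - b < t ≤ a
        have hbpos : 0 < b := by
          rcases lt_or_eq_of_le hb with h | h
          · exact h
          · exfalso; rw [← h] at hcase2; linarith
        have hbne : b ≠ 0 := ne_of_gt hbpos
        have he1 : min a (b+t) = a := min_eq_left (by linarith)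
        have he2 : min b (min (a-t) (b+t)) = a-t := by
          rw [min_eq_left (by linarith : a-t ≤ b+t), min_eq_right (by linarith : a-t ≤ b)]
        rw [he1, he2] at hy
        obtain ⟨p', hp', s', hs', hy'⟩ := ih a (a-t) (by linarith) (by linarith) y hy
        have hy2 : ∀ k', y k' = (a-t) * p' k' + t * s' k' := by
          intro k'
          rw [hy']
          simp only [Pi.add_apply, Pi.smul_apply, smul_eq_mul]
          ring
        have hsmem : (Fin.snoc s' 1 : Fin (m+1) → ℝ) ∈ Stair (m+1) :=
          snoc_mem_stair hs' (by norm_num) (le_refl _) (fun k => hs'.2.1 k)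
        have hsP : (Fin.snoc s' 1 : Fin (m+1) → ℝ) ∈ P (m+1) := snoc_one_mem_P hs'
        have hpmem : ((a-t)/b) • (Fin.snoc p' 0 : Fin (m+1) → ℝ)
            + ((t-(a-b))/b) • (Fin.snoc s' 1 : Fin (m+1) → ℝ) ∈ P (m+1) := by
          refine (P_convex (m+1)) (snoc_zero_mem_P hp') hsP
            (div_nonneg (by linarith) (by linarith)) (div_nonneg (by linarith) (by linarith)) ?_
          field_simp
          try ring
        refine ⟨_, hpmem, _, hsmem, ?_⟩
        funext k
        rw [← hsnoc]
        refine Fin.lastCases ?_ ?_ k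
        · simp only [Pi.add_apply, Pi.smul_apply, smul_eq_mul, Fin.snoc_last, mul_zero,
            mul_one, zero_add]
          field_simp
          try ring
        · intro k'
          simp only [Pi.add_apply, Pi.smul_apply, smul_eq_mul, Fin.snoc_castSucc, mul_zero,
            add_zero]
          rw [hy2 k']
          field_simp
          try ring


noncomputable def dco (i j : ℕ) : ℝ := ((i+j).choose i : ℝ) - ((i+j).choose (i+2) : ℝ)

noncomputable def Vp (m : ℕ) (a b : ℝ) : ℝ :=
  ∑ i ∈ Finset.range (m+1),
    dco i (m-i) / ((Nat.factorial i : ℝ) * (Nat.factorial (m-i) : ℝ)) * (a^i * b^(m-i))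

lemma dco_pascal (i j : ℕ) : dco (i+1) (j+1) = dco i (j+1) + dco (i+1) j := by
  unfold dco
  have e1 : i+1+(j+1) = (i+(j+1))+1 := by ring
  have e2 : i+1+j = i+(j+1) := by ring
  rw [e1, e2]
  have h1 : ((i+(j+1))+1).choose (i+1) = (i+(j+1)).choose i + (i+(j+1)).choose (i+1) :=
    Nat.choose_succ_succ _ _
  have h2 : ((i+(j+1))+1).choose (i+3) = (i+(j+1)).choose (i+2) + (i+(j+1)).choose (i+3) := by
    have := Nat.choose_succ_succ (i+(j+1)) (i+2)
    simpa using this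
  push_cast [h1, h2]
  ring

lemma dco_top (m : ℕ) : dco m 0 = 1 := by
  unfold dco
  rw [add_zero, Nat.choose_self, Nat.choose_eq_zero_of_lt (by omega)]
  norm_num

lemma dco_left (m : ℕ) : dco 0 m = 1 - (m.choose 2 : ℝ) := by
  unfold dco
  rw [zero_add, Nat.choose_zero_right]
  norm_num

/-- the reindexing identity `∑ (C(m,i) - C(m,i+2)) C(m,i+1) = m` -/
lemma starstar (m : ℕ) :
    ∑ i ∈ Finset.range (m+1),
      (((m.choose i : ℝ) - (m.choose (i+2) : ℝ)) * (m.choose (i+1) : ℝ)) = m := by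
  have hsplit : ∀ i, ((m.choose i : ℝ) - (m.choose (i+2) : ℝ)) * (m.choose (i+1) : ℝ)
      = (m.choose i : ℝ) * (m.choose (i+1) : ℝ)
        - (m.choose (i+1) : ℝ) * (m.choose (i+2) : ℝ) := by
    intro i; ring
  rw [Finset.sum_congr rfl (fun i _ => hsplit i), Finset.sum_sub_distrib]
  set g : ℕ → ℝ := fun i => (m.choose i : ℝ) * (m.choose (i+1) : ℝ) with hg
  have h2 : (∑ i ∈ Finset.range (m+1), (m.choose (i+1) : ℝ) * (m.choose (i+2) : ℝ))
      = ∑ i ∈ Finset.range (m+1), g (i+1) := rfl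
  have h3 : (∑ i ∈ Finset.range (m+2), g i)
      = (∑ i ∈ Finset.range (m+1), g (i+1)) + g 0 := Finset.sum_range_succ' g (m+1)
  have h4 : (∑ i ∈ Finset.range (m+2), g i)
      = (∑ i ∈ Finset.range (m+1), g i) + g (m+1) := Finset.sum_range_succ g (m+1)
  have h5 : g (m+1) = 0 := by
    simp only [hg]
    rw [Nat.choose_eq_zero_of_lt (by omega)]
    norm_num
  have h6 : g 0 = m := by
    simp only [hg]
    rw [Nat.choose_zero_right, Nat.choose_one_right]
    norm_num
  rw [h2]
  have : (∑ i ∈ Finset.range (m+1), g (i+1))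
      = (∑ i ∈ Finset.range (m+1), g i) - m := by
    rw [← h6]
    linarith [h3, h4, h5]
  rw [this]
  ring

lemma choose_cast_fact {i m : ℕ} (h : i ≤ m) :
    (m.choose i : ℝ) * ((Nat.factorial i : ℝ) * (Nat.factorial (m-i) : ℝ))
      = (Nat.factorial m : ℝ) := by
  have := Nat.choose_mul_factorial_mul_factorial h
  push_cast [← this]
  ring

lemma fact_pos_real (k : ℕ) : (0:ℝ) < (Nat.factorial k : ℝ) := by
  exact_mod_cast Nat.factorial_pos k

/-- the constant-coefficient identity -/
lemma idc (m : ℕ) :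
    dco 0 (m+1) / (Nat.factorial (m+1) : ℝ)
      = dco 0 m / (Nat.factorial (m+1) : ℝ)
        + ∑ i ∈ Finset.range (m+1),
            dco i (m-i) / ((Nat.factorial i : ℝ) * (Nat.factorial (m-i) : ℝ))
              * (1/((m:ℝ)+1) - 1/((i:ℝ)+1)) := by
  have hterm : ∀ i ∈ Finset.range (m+1),
      dco i (m-i) / ((Nat.factorial i : ℝ) * (Nat.factorial (m-i) : ℝ))
          * (1/((m:ℝ)+1) - 1/((i:ℝ)+1))
        = - (dco i (m-i) * (m.choose (i+1) : ℝ)) / (Nat.factorial (m+1) : ℝ) := by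
    intro i hi
    rw [Finset.mem_range] at hi
    have hi' : i ≤ m := by omega
    have h1 : (m.choose i : ℝ) * ((Nat.factorial i : ℝ) * (Nat.factorial (m-i) : ℝ))
        = (Nat.factorial m : ℝ) := choose_cast_fact hi'
    have h2 : ((m+1).choose (i+1) : ℝ)
        * ((Nat.factorial (i+1) : ℝ) * (Nat.factorial (m-i) : ℝ))
        = (Nat.factorial (m+1) : ℝ) := by
      have e : m + 1 - (i+1) = m - i := by omega
      have := choose_cast_fact (show i+1 ≤ m+1 by omega)
      rwa [e] at this
    have hpas : ((m+1).choose (i+1) : ℝ) = (m.choose i : ℝ) + (m.choose (i+1) : ℝ) := by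
      exact_mod_cast Nat.choose_succ_succ m i
    have hfact1 : (Nat.factorial (i+1) : ℝ) = ((i:ℝ)+1) * (Nat.factorial i : ℝ) := by
      rw [Nat.factorial_succ]; push_cast; ring
    have hfactm : (Nat.factorial (m+1) : ℝ) = ((m:ℝ)+1) * (Nat.factorial m : ℝ) := by
      rw [Nat.factorial_succ]; push_cast; ring
    have hne1 : (Nat.factorial i : ℝ) ≠ 0 := ne_of_gt (fact_pos_real i)
    have hne2 : (Nat.factorial (m-i) : ℝ) ≠ 0 := ne_of_gt (fact_pos_real (m-i))
    have hne3 : (Nat.factorial (m+1) : ℝ) ≠ 0 := ne_of_gt (fact_pos_real (m+1))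
    have hne4 : ((m:ℝ)+1) ≠ 0 := by positivity
    have hne5 : ((i:ℝ)+1) ≠ 0 := by positivity
    field_simp
    rcases eq_or_lt_of_le hi' with heq | hlt
    · subst heq
      rw [Nat.choose_succ_self]
      push_cast
      ring
    · have e2 : m - (i+1) = m - i - 1 := by omega
      have h3 : (m.choose (i+1) : ℝ)
          * ((Nat.factorial (i+1) : ℝ) * (Nat.factorial (m-i-1) : ℝ))
          = (Nat.factorial m : ℝ) := by
        have := choose_cast_fact (show i+1 ≤ m by omega)
        rwa [e2] at this
      have hcast : ((m - i - 1 : ℕ) : ℝ) = (m:ℝ) - (i:ℝ) - 1 := by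
        rw [Nat.sub_sub, Nat.cast_sub (by omega : i+1 ≤ m)]
        push_cast
        ring
      have hfs : (Nat.factorial (m-i) : ℝ)
          = ((m:ℝ) - (i:ℝ)) * (Nat.factorial (m-i-1) : ℝ) := by
        have e3 : m - i = (m - i - 1) + 1 := by omega
        rw [e3, Nat.factorial_succ]
        push_cast [hcast]
        ring
      rw [hfact1] at h3
      rw [hfactm, hfs]
      linear_combination (dco i (m-i) * ((m:ℝ)+1) * ((m:ℝ)-(i:ℝ))) * h3
  rw [Finset.sum_congr rfl hterm]
  have hsum2 : (∑ i ∈ Finset.range (m+1),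
      - (dco i (m-i) * (m.choose (i+1) : ℝ)) / (Nat.factorial (m+1) : ℝ))
      = - (∑ i ∈ Finset.range (m+1), dco i (m-i) * (m.choose (i+1) : ℝ))
          / (Nat.factorial (m+1) : ℝ) := by
    rw [← Finset.sum_div, ← Finset.sum_neg_distrib]
  have hdd : ∀ i ∈ Finset.range (m+1), dco i (m-i)
      = (m.choose i : ℝ) - (m.choose (i+2) : ℝ) := by
    intro i hi
    rw [Finset.mem_range] at hi
    unfold dco
    rw [Nat.add_sub_cancel' (by omega : i ≤ m)]
  have hstar : (∑ i ∈ Finset.range (m+1), dco i (m-i) * (m.choose (i+1) : ℝ)) = m := by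
    rw [Finset.sum_congr rfl (fun i hi => by rw [hdd i hi])]
    exact starstar m
  rw [hsum2, hstar]
  have hdiff : dco 0 (m+1) = dco 0 m - m := by
    rw [dco_left, dco_left]
    have : ((m+1).choose 2 : ℝ) = (m.choose 2 : ℝ) + (m.choose 1 : ℝ) := by
      have := Nat.choose_succ_succ m 1
      have h2 : (m+1).choose 2 = m.choose 1 + m.choose 2 := this
      push_cast [h2]; ring
    rw [this, Nat.choose_one_right]
    push_cast
    ring
  rw [hdiff]
  ring


noncomputable def Fc (m : ℕ) : ℕ → ℝ :=
  fun i => dco i (m-i) / ((Nat.factorial i : ℝ) * (Nat.factorial (m-i) : ℝ))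

lemma Vp_eq (m : ℕ) (a b : ℝ) :
    Vp m a b = ∑ i ∈ Finset.range (m+1), Fc m i * (a^i * b^(m-i)) := rfl

lemma int1 (m : ℕ) (b : ℝ) :
    (∫ u in (0:ℝ)..b, Vp m u u)
      = (∑ i ∈ Finset.range (m+1), Fc m i) * (b^(m+1) / ((m:ℝ)+1)) := by
  have hfun : ∀ u : ℝ, Vp m u u = (∑ i ∈ Finset.range (m+1), Fc m i) * u^m := by
    intro u
    rw [Vp_eq, Finset.sum_mul]
    refine Finset.sum_congr rfl fun i hi => ?_
    rw [Finset.mem_range] at hi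
    rw [← pow_add, Nat.add_sub_cancel' (by omega : i ≤ m)]
  simp_rw [hfun]
  rw [intervalIntegral.integral_const_mul, integral_pow]
  norm_num

lemma int2 (m : ℕ) (a b : ℝ) :
    (∫ u in b..a, Vp m u b)
      = ∑ i ∈ Finset.range (m+1),
          (Fc m i * b^(m-i)) * ((a^(i+1) - b^(i+1)) / ((i:ℝ)+1)) := by
  have hfun : ∀ u : ℝ, Vp m u b
      = ∑ i ∈ Finset.range (m+1), (Fc m i * b^(m-i)) * u^i := by
    intro u
    rw [Vp_eq]
    refine Finset.sum_congr rfl fun i hi => ?_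
    ring
  simp_rw [hfun]
  rw [intervalIntegral.integral_finset_sum]
  · refine Finset.sum_congr rfl fun i hi => ?_
    rw [intervalIntegral.integral_const_mul, integral_pow]
  · intro i hi
    exact (Continuous.intervalIntegrable (by continuity) _ _)

lemma int3 (m : ℕ) (a b : ℝ) :
    (∫ s in (0:ℝ)..b, Vp m a s)
      = ∑ i ∈ Finset.range (m+1),
          (Fc m i * a^i) * (b^(m-i+1) / ((m-i:ℕ)+(1:ℝ))) := by
  have hfun : ∀ s : ℝ, Vp m a s
      = ∑ i ∈ Finset.range (m+1), (Fc m i * a^i) * s^(m-i) := by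
    intro s
    rw [Vp_eq]
    refine Finset.sum_congr rfl fun i hi => ?_
    ring
  simp_rw [hfun]
  rw [intervalIntegral.integral_finset_sum]
  · refine Finset.sum_congr rfl fun i hi => ?_
    rw [intervalIntegral.integral_const_mul, integral_pow]
    norm_num
  · intro i hi
    exact (Continuous.intervalIntegrable (by continuity) _ _)



lemma Fc_nz_facts (k : ℕ) : ((Nat.factorial k : ℝ)) ≠ 0 := ne_of_gt (fact_pos_real k)

lemma hB_lem (m : ℕ) : Fc (m+1) (m+1) = Fc m m / ((m:ℝ)+1) := by
  unfold Fc
  rw [Nat.sub_self, Nat.sub_self, dco_top, dco_top]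
  have hf : ((m+1).factorial : ℝ) = ((m:ℝ)+1) * (m.factorial : ℝ) := by
    rw [Nat.factorial_succ]; push_cast; ring
  rw [hf]
  have h0 : ((Nat.factorial 0 : ℕ) : ℝ) = 1 := by norm_num
  rw [h0]
  have h1 : (m.factorial : ℝ) ≠ 0 := Fc_nz_facts m
  have h2 : ((m:ℝ)+1) ≠ 0 := by positivity
  field_simp

lemma hA_lem (m i : ℕ) (hi : i < m) :
    Fc (m+1) (i+1) = Fc m i / ((i:ℝ)+1) + Fc m (i+1) / ((m-i:ℕ):ℝ) := by
  unfold Fc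
  have e0 : m + 1 - (i+1) = m - i := by omega
  have e1 : m - (i+1) = m - i - 1 := by omega
  rw [e0, e1]
  have ep : m - i = (m-i-1)+1 := by omega
  have hpas : dco (i+1) (m-i) = dco i (m-i) + dco (i+1) (m-i-1) := by
    rw [ep, dco_pascal, ← ep]
  rw [hpas]
  have hf1 : ((i+1).factorial : ℝ) = ((i:ℝ)+1) * (i.factorial : ℝ) := by
    rw [Nat.factorial_succ]; push_cast; ring
  have hf2 : ((m-i).factorial : ℝ) = ((m-i:ℕ):ℝ) * ((m-i-1).factorial : ℝ) := by
    rw [ep, Nat.factorial_succ, ← ep]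
    push_cast [Nat.cast_sub (by omega : i ≤ m), Nat.cast_sub (by omega : i + 1 ≤ m)]
    ring
  have hmi : ((m-i:ℕ):ℝ) ≠ 0 := by
    have : (0:ℕ) < m - i := by omega
    positivity
  have h1 : (i.factorial : ℝ) ≠ 0 := Fc_nz_facts i
  have h2 : ((m-i-1).factorial : ℝ) ≠ 0 := Fc_nz_facts (m-i-1)
  have h3 : ((i:ℝ)+1) ≠ 0 := by positivity
  rw [hf1, hf2]
  field_simp

lemma hG_lem (m : ℕ) :
    Fc (m+1) 0 = (∑ i ∈ Finset.range (m+1), Fc m i)/((m:ℝ)+1)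
      - (∑ i ∈ Finset.range (m+1), Fc m i/((i:ℝ)+1)) + Fc m 0/((m:ℝ)+1) := by
  have h0 : Fc (m+1) 0 = dco 0 (m+1) / (Nat.factorial (m+1) : ℝ) := by
    unfold Fc
    norm_num
  have h1 : Fc m 0/((m:ℝ)+1) = dco 0 m / (Nat.factorial (m+1) : ℝ) := by
    unfold Fc
    have hf : ((m+1).factorial : ℝ) = ((m:ℝ)+1) * (m.factorial : ℝ) := by
      rw [Nat.factorial_succ]; push_cast; ring
    have h00 : ((Nat.factorial 0 : ℕ):ℝ) = 1 := by norm_num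
    rw [Nat.sub_zero, h00, one_mul, hf, div_div, mul_comm ((m.factorial : ℝ)) (((m:ℝ)+1))]
  have hidc := idc m
  rw [h0, h1, hidc]
  have hsum : (∑ i ∈ Finset.range (m+1),
      dco i (m-i) / ((Nat.factorial i : ℝ) * (Nat.factorial (m-i) : ℝ))
        * (1/((m:ℝ)+1) - 1/((i:ℝ)+1)))
      = (∑ i ∈ Finset.range (m+1), Fc m i)/((m:ℝ)+1)
        - (∑ i ∈ Finset.range (m+1), Fc m i/((i:ℝ)+1)) := by
    rw [Finset.sum_div, ← Finset.sum_sub_distrib]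
    refine Finset.sum_congr rfl fun i hi => ?_
    unfold Fc
    ring
  rw [hsum]
  ring

lemma VpA1 (m : ℕ) (a b : ℝ) :
    Vp (m+1) a b = (∫ u in (0:ℝ)..b, Vp m u u) + (∫ u in b..a, Vp m u b)
      + (∫ s in (0:ℝ)..b, Vp m a s) := by
  rw [int1, int2, int3]
  have hS2 : (∑ i ∈ Finset.range (m+1), (Fc m i * b^(m-i)) * ((a^(i+1) - b^(i+1))/((i:ℝ)+1)))
      = (∑ i ∈ Finset.range (m+1), (Fc m i/((i:ℝ)+1)) * (a^(i+1) * b^(m-i)))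
        - (∑ i ∈ Finset.range (m+1), Fc m i/((i:ℝ)+1)) * b^(m+1) := by
    rw [Finset.sum_mul, ← Finset.sum_sub_distrib]
    refine Finset.sum_congr rfl fun i hi => ?_
    rw [Finset.mem_range] at hi
    have e : (m-i)+(i+1) = m+1 := by omega
    have hb : b^(m+1) = b^(m-i) * b^(i+1) := by rw [← pow_add, e]
    rw [hb]
    ring
  have hS3 : (∑ i ∈ Finset.range (m+1), (Fc m i * a^i) * (b^(m-i+1)/(((m-i:ℕ):ℝ)+1)))
      = (∑ i ∈ Finset.range m, (Fc m (i+1)/((m-i:ℕ):ℝ)) * (a^(i+1) * b^(m-i)))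
        + Fc m 0 * (b^(m+1)/((m:ℝ)+1)) := by
    rw [Finset.sum_range_succ' (fun i => (Fc m i * a^i) * (b^(m-i+1)/(((m-i:ℕ):ℝ)+1))) m]
    congr 1
    · refine Finset.sum_congr rfl fun i hi => ?_
      rw [Finset.mem_range] at hi
      have e1 : m-(i+1)+1 = m-i := by omega
      have e2 : ((m-(i+1):ℕ):ℝ) + 1 = ((m-i:ℕ):ℝ) := by
        have h : (m-(i+1)) + 1 = m-i := by omega
        exact_mod_cast h
      rw [e1, e2]
      ring
    · norm_num
  have hLHS : (∑ i ∈ Finset.range (m+1+1), Fc (m+1) i * (a^i * b^(m+1-i)))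
      = (∑ i ∈ Finset.range m, Fc (m+1) (i+1) * (a^(i+1) * b^(m-i)))
        + Fc (m+1) (m+1) * a^(m+1) + Fc (m+1) 0 * b^(m+1) := by
    rw [Finset.sum_range_succ' (fun i => Fc (m+1) i * (a^i * b^(m+1-i))) (m+1)]
    rw [Finset.sum_range_succ (fun i => Fc (m+1) (i+1) * (a^(i+1) * b^(m+1-(i+1)))) m]
    have e3 : ∀ i : ℕ, m+1-(i+1) = m-i := fun i => by omega
    simp only [e3, Nat.sub_self, pow_zero, mul_one, one_mul, Nat.sub_zero]
  have hAsum : (∑ i ∈ Finset.range m, Fc (m+1) (i+1) * (a^(i+1) * b^(m-i)))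
      = (∑ i ∈ Finset.range m, (Fc m i/((i:ℝ)+1)) * (a^(i+1) * b^(m-i)))
        + (∑ i ∈ Finset.range m, (Fc m (i+1)/((m-i:ℕ):ℝ)) * (a^(i+1) * b^(m-i))) := by
    rw [← Finset.sum_add_distrib]
    refine Finset.sum_congr rfl fun i hi => ?_
    rw [Finset.mem_range] at hi
    rw [hA_lem m i hi]
    ring
  have hS2top : (∑ i ∈ Finset.range (m+1), (Fc m i/((i:ℝ)+1)) * (a^(i+1) * b^(m-i)))
      = (∑ i ∈ Finset.range m, (Fc m i/((i:ℝ)+1)) * (a^(i+1) * b^(m-i)))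
        + (Fc m m/((m:ℝ)+1)) * a^(m+1) := by
    rw [Finset.sum_range_succ]
    simp only [Nat.sub_self, pow_zero, mul_one]
  show (∑ i ∈ Finset.range (m+1+1), Fc (m+1) i * (a^i * b^(m+1-i))) = _
  rw [hLHS, hAsum, hB_lem, hG_lem, hS2, hS3, hS2top]
  ring


lemma N1 (n : ℕ) :
    (∑ i ∈ Finset.range (n+1), n.choose i * n.choose i) = (2*n).choose n := by
  have h := Nat.add_choose_eq n n n
  rw [Finset.Nat.sum_antidiagonal_eq_sum_range_succ_mk] at h
  rw [two_mul, h]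
  refine Finset.sum_congr rfl fun i hi => ?_
  rw [Finset.mem_range] at hi
  rw [Nat.choose_symm (by omega : i ≤ n)]

lemma N2 (k : ℕ) :
    (∑ i ∈ Finset.range (k+2+1), (k+2).choose i * (k+2).choose (i+2))
      = (2*(k+2)).choose k := by
  have h := Nat.add_choose_eq (k+2) (k+2) k
  rw [Finset.Nat.sum_antidiagonal_eq_sum_range_succ_mk] at h
  have h2 : (∑ i ∈ Finset.range (k+1), (k+2).choose i * (k+2).choose (k-i))
      = ∑ i ∈ Finset.range (k+1), (k+2).choose i * (k+2).choose (i+2) := by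
    refine Finset.sum_congr rfl fun i hi => ?_
    rw [Finset.mem_range] at hi
    have e : k + 2 - (k - i) = i + 2 := by omega
    rw [← Nat.choose_symm (show k - i ≤ k+2 by omega), e]
  have h3 : (∑ i ∈ Finset.range (k+2+1), (k+2).choose i * (k+2).choose (i+2))
      = ∑ i ∈ Finset.range (k+1), (k+2).choose i * (k+2).choose (i+2) := by
    symm
    refine Finset.sum_subset (Finset.range_subset_range.mpr (by omega)) ?_
    intro i hi hni
    rw [Finset.mem_range] at hi
    rw [Finset.mem_range, not_lt] at hni
    rw [Nat.choose_eq_zero_of_lt (by omega : k+2 < i+2), mul_zero]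
  rw [h3, ← h2, ← h]
  congr 1
  omega

lemma N3 (k : ℕ) :
    catalan (k+3) + (2*(k+2)).choose k = (2*(k+2)).choose (k+2) := by
  have c1 : (k+4) * catalan (k+3) = (k+3).centralBinom := by
    have := succ_mul_catalan_eq_centralBinom (k+3)
    convert this using 2
  have c2 : (k+3) * (k+3).centralBinom = 2*(2*(k+2)+1) * (k+2).centralBinom :=
    Nat.succ_mul_centralBinom_succ (k+2)
  have c3 : (k+2).centralBinom = (2*(k+2)).choose (k+2) := rfl
  have hA := Nat.choose_succ_right_eq (2*(k+2)) k
  have hB := Nat.choose_succ_right_eq (2*(k+2)) (k+1)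
  have eA : 2*(k+2) - k = k+4 := by omega
  have eB : 2*(k+2) - (k+1) = k+3 := by omega
  rw [eA] at hA
  rw [eB] at hB
  -- hA : C(2k+4, k+1) * (k+1) = C(2k+4, k) * (k+4)
  -- hB : C(2k+4, k+2) * (k+2) = C(2k+4, k+1) * (k+3)
  have c4 : (k+3)*(k+4)*((2*(k+2)).choose k) = (k+1)*(k+2)*((2*(k+2)).choose (k+2)) := by
    calc (k+3)*(k+4)*((2*(k+2)).choose k)
        = (k+3)*(((2*(k+2)).choose k) * (k+4)) := by ring
      _ = (k+3)*(((2*(k+2)).choose (k+1)) * (k+1)) := by rw [← hA]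
      _ = (k+1)*(((2*(k+2)).choose (k+1)) * (k+3)) := by ring
      _ = (k+1)*(((2*(k+2)).choose (k+2)) * (k+2)) := by rw [← hB]
      _ = (k+1)*(k+2)*((2*(k+2)).choose (k+2)) := by ring
  have e1 : (k+3)*(k+4)*catalan (k+3) = 2*(2*(k+2)+1) * ((2*(k+2)).choose (k+2)) := by
    calc (k+3)*(k+4)*catalan (k+3) = (k+3)*((k+4)*catalan (k+3)) := by ring
      _ = (k+3)*(k+3).centralBinom := by rw [c1]
      _ = 2*(2*(k+2)+1) * (k+2).centralBinom := c2
      _ = 2*(2*(k+2)+1) * ((2*(k+2)).choose (k+2)) := by rw [c3]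
  refine Nat.eq_of_mul_eq_mul_left (show 0 < (k+3)*(k+4) by positivity) ?_
  calc (k+3)*(k+4)*(catalan (k+3) + (2*(k+2)).choose k)
      = (k+3)*(k+4)*catalan (k+3) + (k+3)*(k+4)*((2*(k+2)).choose k) := by ring
    _ = 2*(2*(k+2)+1) * ((2*(k+2)).choose (k+2))
        + (k+1)*(k+2)*((2*(k+2)).choose (k+2)) := by rw [e1, c4]
    _ = (k+3)*(k+4)*((2*(k+2)).choose (k+2)) := by ring

lemma keysum (n : ℕ) (hn : 1 ≤ n) :
    (n.factorial : ℝ) * Vp n 1 1 = (catalan (n+1) : ℝ) := by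
  have h1 : (n.factorial : ℝ) * Vp n 1 1
      = ∑ i ∈ Finset.range (n+1), (n.choose i : ℝ) * dco i (n-i) := by
    unfold Vp
    rw [Finset.mul_sum]
    refine Finset.sum_congr rfl fun i hi => ?_
    rw [Finset.mem_range] at hi
    have hle : i ≤ n := by omega
    have hcf := choose_cast_fact hle
    have hne1 : (Nat.factorial i : ℝ) ≠ 0 := ne_of_gt (fact_pos_real i)
    have hne2 : (Nat.factorial (n-i) : ℝ) ≠ 0 := ne_of_gt (fact_pos_real (n-i))
    rw [one_pow, one_pow, mul_one, ← hcf]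
    field_simp
  have h2 : ∀ i ∈ Finset.range (n+1),
      (n.choose i : ℝ) * dco i (n-i)
        = (n.choose i : ℝ) * (n.choose i : ℝ) - (n.choose i : ℝ) * (n.choose (i+2) : ℝ) := by
    intro i hi
    rw [Finset.mem_range] at hi
    unfold dco
    rw [Nat.add_sub_cancel' (by omega : i ≤ n)]
    ring
  rw [h1, Finset.sum_congr rfl h2, Finset.sum_sub_distrib]
  rcases Nat.lt_or_ge n 2 with hn2 | hn2
  · interval_cases n
    norm_num [Finset.sum_range_succ, catalan_two, Nat.choose]
  · obtain ⟨k, rfl⟩ : ∃ k, n = k + 2 := ⟨n - 2, by omega⟩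
    have hN1 : (∑ i ∈ Finset.range (k+2+1), ((k+2).choose i : ℝ) * ((k+2).choose i : ℝ))
        = ((2*(k+2)).choose (k+2) : ℝ) := by
      exact_mod_cast congrArg (Nat.cast (R := ℝ)) (N1 (k+2))
    have hN2 : (∑ i ∈ Finset.range (k+2+1),
        ((k+2).choose i : ℝ) * ((k+2).choose (i+2) : ℝ))
        = ((2*(k+2)).choose k : ℝ) := by
      exact_mod_cast congrArg (Nat.cast (R := ℝ)) (N2 k)
    rw [hN1, hN2]
    have hN3 : (catalan (k+3) : ℝ) + ((2*(k+2)).choose k : ℝ)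
        = ((2*(k+2)).choose (k+2) : ℝ) := by
      exact_mod_cast congrArg (Nat.cast (R := ℝ)) (N3 k)
    have he : k+2+1 = k+3 := by omega
    rw [he]
    linarith


lemma isClosed_R (m : ℕ) (a b : ℝ) : IsClosed (R m a b) := by
  classical
  have : R m a b = ⋂ γ : Fin m → ℝ,
      {x | Valid γ → (∑ k, γ k * x k) ≤ if MinusT γ then b else a} := by
    ext x
    simp only [R, Set.mem_setOf_eq, Set.mem_iInter]
  rw [this]
  refine isClosed_iInter fun γ => ?_
  by_cases hγ : Valid γ
  · have : {x : Fin m → ℝ | Valid γ → (∑ k, γ k * x k) ≤ if MinusT γ then b else a}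
        = {x | (∑ k, γ k * x k) ≤ if MinusT γ then b else a} := by
      ext x; simp [hγ]
    rw [this]
    exact isClosed_le (by continuity) continuous_const
  · have : {x : Fin m → ℝ | Valid γ → (∑ k, γ k * x k) ≤ if MinusT γ then b else a}
        = Set.univ := by
      ext x; simp [hγ]
    rw [this]
    exact isClosed_univ

lemma Vp_continuous (m : ℕ) : Continuous (fun p : ℝ × ℝ => Vp m p.1 p.2) := by
  unfold Vp
  refine continuous_finset_sum _ fun i _ => ?_
  exact continuous_const.mul ((continuous_fst.pow i).mul (continuous_snd.pow (m-i)))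

lemma R_one_eq (a b : ℝ) (hb : 0 ≤ b) :
    R 1 a b = (fun x : Fin 1 → ℝ => x 0) ⁻¹' (Set.Icc (-b) a) := by
  ext x
  constructor
  · intro hx
    have h1 : x 0 ≤ a := by
      have := hx (fun _ => 1) valid_one1
      rw [if_neg not_minusT_one1] at this
      simpa using this
    have h2 : -b ≤ x 0 := by
      have := hx (fun _ => -1) valid_negone1
      rw [if_pos minusT_negone1] at this
      simp only [neg_one_mul, Fin.sum_univ_one] at this
      linarith
    exact ⟨h2, h1⟩
  · rintro ⟨h2, h1⟩
    intro γ hγ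
    have hsum : (∑ k, γ k * x k) = γ 0 * x 0 := Fin.sum_univ_one _
    rcases hγ.1 0 with h | h | h
    · have hmt : MinusT γ := by
        intro j hj
        have hj0 : j = 0 := Subsingleton.elim _ _
        rw [hj0, h] at hj
        norm_num at hj
      rw [if_pos hmt, hsum, h]
      linarith
    · have hmt : MinusT γ := by
        intro j hj
        have hj0 : j = 0 := Subsingleton.elim _ _
        rw [hj0, h] at hj
        norm_num at hj
      rw [if_pos hmt, hsum, h]
      linarith
    · have hmt : ¬ MinusT γ := by
        intro hc
        obtain ⟨k, hk1, _⟩ := hc 0 h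
        rw [Fin.lt_iff_val_lt_val] at hk1
        omega
      rw [if_neg hmt, hsum, h]
      linarith

lemma volume_R_one (a b : ℝ) (hb : 0 ≤ b) :
    volume (R 1 a b) = ENNReal.ofReal (a + b) := by
  rw [R_one_eq a b hb]
  have hmp : MeasurePreserving (MeasurableEquiv.funUnique (Fin 1) ℝ) volume volume :=
    volume_preserving_funUnique (Fin 1) ℝ
  have : ((fun x : Fin 1 → ℝ => x 0) ⁻¹' (Set.Icc (-b) a))
      = (MeasurableEquiv.funUnique (Fin 1) ℝ) ⁻¹' (Set.Icc (-b) a) := rfl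
  rw [this, hmp.measure_preimage measurableSet_Icc.nullMeasurableSet, Real.volume_Icc]
  congr 1
  ring


lemma vol_R_main : ∀ m, 1 ≤ m → ∀ a b : ℝ, 0 ≤ b → b ≤ a →
    volume (R m a b) = ENNReal.ofReal (Vp m a b) ∧ 0 ≤ Vp m a b := by
  intro m hm
  induction m, hm using Nat.le_induction with
  | base =>
    intro a b hb hba
    have hVp1 : Vp 1 a b = b + a := by
      unfold Vp dco
      rw [Finset.sum_range_succ, Finset.sum_range_one]
      norm_num [Nat.choose]
    refine ⟨?_, by rw [hVp1]; linarith⟩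
    rw [hVp1, volume_R_one a b hb]
    congr 1
    ring
  | succ m hm ih =>
    intro a b hb hba
    have hnn : 0 ≤ Vp (m+1) a b := by
      rw [VpA1]
      have i1 : 0 ≤ ∫ u in (0:ℝ)..b, Vp m u u :=
        intervalIntegral.integral_nonneg hb (fun u hu => (ih u u hu.1 (le_refl u)).2)
      have i2 : 0 ≤ ∫ u in b..a, Vp m u b :=
        intervalIntegral.integral_nonneg hba (fun u hu => (ih u b hb hu.1).2)
      have i3 : 0 ≤ ∫ s in (0:ℝ)..b, Vp m a s :=
        intervalIntegral.integral_nonneg hb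
          (fun s hs => (ih a s hs.1 (le_trans hs.2 hba)).2)
      linarith
    refine ⟨?_, hnn⟩
    classical
    set g : ℝ → ℝ := fun t => Vp m (min a (b+t)) (min b (min (a-t) (b+t))) with hgdef
    have gcont : Continuous g := by
      refine (Vp_continuous m).comp (Continuous.prodMk ?_ ?_)
      · exact continuous_const.min (continuous_const.add continuous_id)
      · exact continuous_const.min
          ((continuous_const.sub continuous_id).min (continuous_const.add continuous_id))
    have hwedge : ∀ t ∈ Set.Icc (-b) a,
        0 ≤ min b (min (a-t) (b+t)) ∧ min b (min (a-t) (b+t)) ≤ min a (b+t) := by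
      intro t ht
      obtain ⟨ht1, ht2⟩ := ht
      constructor
      · exact le_min hb (le_min (by linarith) (by linarith))
      · exact le_min (le_trans (min_le_left _ _) hba)
          (le_trans (min_le_right _ _) (min_le_right _ _))
    have e := MeasurableEquiv.piFinSuccAbove (fun _ : Fin (m+1) => ℝ) (Fin.last m)
    set e : (Fin (m+1) → ℝ) ≃ᵐ ℝ × (Fin m → ℝ) :=
      MeasurableEquiv.piFinSuccAbove (fun _ : Fin (m+1) => ℝ) (Fin.last m) with hedef
    have hmp : MeasurePreserving e volume volume :=
      volume_preserving_piFinSuccAbove (fun _ : Fin (m+1) => ℝ) (Fin.last m)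
    have hRmeas : MeasurableSet (R (m+1) a b) := (isClosed_R _ _ _).measurableSet
    have h1 : volume (R (m+1) a b)
        = (volume : Measure (ℝ × (Fin m → ℝ))) (e.symm ⁻¹' (R (m+1) a b)) :=
      ((hmp.symm e).measure_preimage hRmeas.nullMeasurableSet).symm
    have hsymm : ∀ (t : ℝ) (y : Fin m → ℝ), e.symm (t, y) = Fin.snoc y t := by
      intro t y
      rw [hedef]
      show (Fin.insertNthEquiv (fun _ => ℝ) (Fin.last m)) (t, y) = Fin.snoc y t
      simp [Fin.insertNthEquiv, Fin.insertNth_last']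
    have hsec : ∀ t : ℝ, (Prod.mk t ⁻¹' (e.symm ⁻¹' (R (m+1) a b)))
        = if t ∈ Set.Icc (-b) a
            then R m (min a (b+t)) (min b (min (a-t) (b+t))) else (∅ : Set (Fin m → ℝ)) := by
      intro t
      ext y
      simp only [Set.mem_preimage]
      rw [hsymm t y, mem_R_snoc_iff]
      by_cases ht : t ∈ Set.Icc (-b) a
      · rw [if_pos ht]
        exact ⟨fun h => h.2.2, fun h => ⟨ht.1, ht.2, h⟩⟩
      · rw [if_neg ht]
        simp only [Set.mem_empty_iff_false, iff_false]
        rintro ⟨hh1, hh2, -⟩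
        exact ht ⟨hh1, hh2⟩
    have hsecmeas : MeasurableSet (e.symm ⁻¹' (R (m+1) a b)) :=
      e.symm.measurable hRmeas
    rw [h1, Measure.volume_eq_prod, Measure.prod_apply hsecmeas]
    have hptwise : ∀ t : ℝ, volume (Prod.mk t ⁻¹' (e.symm ⁻¹' (R (m+1) a b)))
        = (Set.Icc (-b) a).indicator (fun t => ENNReal.ofReal (g t)) t := by
      intro t
      rw [hsec t]
      by_cases ht : t ∈ Set.Icc (-b) a
      · rw [if_pos ht, Set.indicator_of_mem ht]
        exact (ih _ _ (hwedge t ht).1 (hwedge t ht).2).1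
      · rw [if_neg ht, Set.indicator_of_notMem ht, measure_empty]
    rw [lintegral_congr hptwise, lintegral_indicator measurableSet_Icc]
    have hint : IntegrableOn g (Set.Icc (-b) a) volume := gcont.integrableOn_Icc
    have hnnae : 0 ≤ᵐ[volume.restrict (Set.Icc (-b) a)] g :=
      (ae_restrict_iff' measurableSet_Icc).mpr (ae_of_all _ fun t ht =>
        (ih _ _ (hwedge t ht).1 (hwedge t ht).2).2)
    rw [← ofReal_integral_eq_lintegral_ofReal hint hnnae]
    congr 1
    have hle : -b ≤ a := by linarith
    rw [MeasureTheory.integral_Icc_eq_integral_Ioc, ← intervalIntegral.integral_of_le hle]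
    have hii : ∀ c d : ℝ, IntervalIntegrable g volume c d :=
      fun c d => gcont.intervalIntegrable _ _
    have hsplitA : (∫ t in (0:ℝ)..(a-b), g t) + (∫ t in (a-b)..a, g t)
        = ∫ t in (0:ℝ)..a, g t :=
      intervalIntegral.integral_add_adjacent_intervals (hii _ _) (hii _ _)
    have hsplitB : (∫ t in (-b)..(0:ℝ), g t) + (∫ t in (0:ℝ)..a, g t)
        = ∫ t in (-b)..a, g t :=
      intervalIntegral.integral_add_adjacent_intervals (hii _ _) (hii _ _)
    have p1 : (∫ t in (-b)..(0:ℝ), g t) = ∫ u in (0:ℝ)..b, Vp m u u := by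
      have heq : Set.EqOn g (fun t => Vp m (b+t) (b+t)) (Set.uIcc (-b) 0) := by
        intro t ht
        rw [Set.uIcc_of_le (by linarith : -b ≤ 0)] at ht
        obtain ⟨ht1, ht2⟩ := ht
        rw [hgdef]
        simp only
        rw [min_eq_right (by linarith : b+t ≤ a),
          min_eq_right (by linarith : b+t ≤ a-t), min_eq_right (by linarith : b+t ≤ b)]
      rw [intervalIntegral.integral_congr heq]
      simp_rw [add_comm b]
      rw [intervalIntegral.integral_comp_add_right (fun u => Vp m u u) b]
      norm_num
    have p2 : (∫ t in (0:ℝ)..(a-b), g t) = ∫ u in b..a, Vp m u b := by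
      have heq : Set.EqOn g (fun t => Vp m (b+t) b) (Set.uIcc 0 (a-b)) := by
        intro t ht
        rw [Set.uIcc_of_le (by linarith : (0:ℝ) ≤ a-b)] at ht
        obtain ⟨ht1, ht2⟩ := ht
        rw [hgdef]
        simp only
        rw [min_eq_right (by linarith : b+t ≤ a),
          min_eq_left (le_min (by linarith) (by linarith))]
      rw [intervalIntegral.integral_congr heq]
      simp_rw [add_comm b]
      rw [intervalIntegral.integral_comp_add_right (fun u => Vp m u b) b]
      norm_num
    have p3 : (∫ t in (a-b)..a, g t) = ∫ s in (0:ℝ)..b, Vp m a s := by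
      have heq : Set.EqOn g (fun t => Vp m a (a-t)) (Set.uIcc (a-b) a) := by
        intro t ht
        rw [Set.uIcc_of_le (by linarith : a-b ≤ a)] at ht
        obtain ⟨ht1, ht2⟩ := ht
        rw [hgdef]
        simp only
        rw [min_eq_left (by linarith : a ≤ b+t),
          min_eq_left (by linarith : a-t ≤ b+t), min_eq_right (by linarith : a-t ≤ b)]
      rw [intervalIntegral.integral_congr heq]
      rw [intervalIntegral.integral_comp_sub_left (fun s => Vp m a s) a]
      norm_num
    rw [← hsplitB, ← hsplitA, p1, p2, p3, VpA1]
    ring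


lemma convex_R (m : ℕ) (a b : ℝ) : Convex ℝ (R m a b) := by
  classical
  intro x hx y hy α β hα hβ hαβ
  intro γ hγ
  have hsum : (∑ k, γ k * (α • x + β • y) k)
      = α * (∑ k, γ k * x k) + β * (∑ k, γ k * y k) := by
    rw [Finset.mul_sum, Finset.mul_sum, ← Finset.sum_add_distrib]
    refine Finset.sum_congr rfl fun k _ => ?_
    simp only [Pi.add_apply, Pi.smul_apply, smul_eq_mul]
    ring
  rw [hsum]
  have h1 := hx γ hγ
  have h2 := hy γ hγ
  calc α * (∑ k, γ k * x k) + β * (∑ k, γ k * y k)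
      ≤ α * (if MinusT γ then b else a) + β * (if MinusT γ then b else a) :=
        add_le_add (mul_le_mul_of_nonneg_left h1 hα) (mul_le_mul_of_nonneg_left h2 hβ)
    _ = (if MinusT γ then b else a) := by rw [← add_mul, hαβ, one_mul]

lemma gen_sub_R (n : ℕ) : gen n ⊆ R n 1 1 := by
  classical
  rintro v (⟨i, j, hij, rfl⟩ | ⟨i, rfl⟩) <;> intro γ hγ
  · rw [ite_self]
    exact root_bound hγ i j
  · have hsum : (∑ k, γ k * (-fun k => if k = i then (1:ℝ) else 0) k) = -γ i := by
      have hterm : ∀ k : Fin n,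
          γ k * (-fun k => if k = i then (1:ℝ) else 0) k = if k = i then -γ k else 0 := by
        intro k
        by_cases h : k = i <;> simp [h]
      rw [Finset.sum_congr rfl (fun k _ => hterm k)]
      rw [Finset.sum_ite_eq' Finset.univ i (fun k => -γ k)]
      simp
    rcases hγ.1 i with h | h | h <;> rw [ite_self, hsum, h] <;> norm_num

lemma hull_eq (n : ℕ) (hn : 1 ≤ n) : convexHull ℝ (gen n) = R n 1 1 := by
  apply le_antisymm
  · exact convexHull_min (gen_sub_R n) (convex_R n 1 1)
  · intro x hx
    obtain ⟨p, hp, s, hs, hxe⟩ := master n hn 1 1 (by norm_num) (le_refl 1) x hx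
    rw [hxe]
    simp only [one_smul, sub_self, zero_smul, add_zero]
    exact hp

end ClusterAn

/-- For `n ≥ 1`, the convex hull of the positive roots of type `Aₙ` together with the
negative standard basis vectors `-e₁, …, -eₙ` has normalized (integral, i.e. `n! ×`
Euclidean) volume the Catalan number `C_{n+1}`. -/
theorem volume_cluster_polytope_An (n : ℕ) (hn : 1 ≤ n) :
    (n.factorial : ENNReal) * volume (convexHull ℝ
        ({v : Fin n → ℝ | ∃ i j : Fin n, i ≤ j ∧ v = intervalRoot n i j} ∪
          {v : Fin n → ℝ | ∃ i : Fin n, v = -fun k => if k = i then (1 : ℝ) else 0}))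
      = (catalan (n + 1) : ENNReal) := by
  have hgen : ({v : Fin n → ℝ | ∃ i j : Fin n, i ≤ j ∧ v = intervalRoot n i j} ∪
      {v : Fin n → ℝ | ∃ i : Fin n, v = -fun k => if k = i then (1 : ℝ) else 0})
      = ClusterAn.gen n := rfl
  rw [hgen, ClusterAn.hull_eq n hn,
    (ClusterAn.vol_R_main n hn 1 1 (by norm_num) (le_refl 1)).1,
    ← ENNReal.ofReal_natCast n.factorial,
    ← ENNReal.ofReal_mul (by positivity : (0:ℝ) ≤ (n.factorial : ℝ)),
    ClusterAn.keysum n hn, ENNReal.ofReal_natCast]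
end

section
/- Define t(n) = C(2n,n), t_clus(n) = C_{n+1} (the (n+1)-st Catalan number), and t_plus(n) = C_n. Then for the linear quiver A_n, t(A_n) = sum over subsets I of {1,...,n} of (the product of t_plus over the connected components of I) times (the product of t_plus over the connected components of the complement of I); for n=1,2,3 one has t(1)=2, t(2)=6, t(3)=20 with t_plus(1)=1, t_plus(2)=2, t_plus(3)=5 and t_clus(1)=2, t_clus(2)=5, t_clus(3)=14. -/
/-- Auxiliary: given the remaining list, the value of the current run and its length so far,
compute the product over all (maximal) runs of equal entries of the Catalan number of the
run length. -/
def runCatalanProdAux : List Bool → Bool → ℕ → ℕ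
  | [], _, k => catalan k
  | b :: t, c, k => if b = c then runCatalanProdAux t c (k + 1)
      else catalan k * runCatalanProdAux t b 1

/-- For a list of booleans encoding a subset `I` of the vertices `{1, …, n}` of the linear
graph `Aₙ` (`true` means the vertex lies in `I`), the product over all connected components
(maximal runs) of `I` and of its complement of the Catalan numbers of their sizes; this is
`t⁺` of the components of `I` times `t⁺` of the components of the complement. -/
def runCatalanProd : List Bool → ℕ
  | [] => 1
  | b :: t => runCatalanProdAux t b 1

open Finset

private lemma catalan_succ_range (j : ℕ) :
    catalan (j + 1) = ∑ i ∈ range (j + 1), catalan i * catalan (j - i) := by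
  rw [catalan_succ]
  exact Fin.sum_univ_eq_sum_range (fun i => catalan i * catalan (j - i)) (j + 1)

/-- Key convolution identity between Catalan numbers and binomial coefficients. -/
private lemma keyS : ∀ n r : ℕ,
    (∑ k ∈ range (n + 1), catalan k * ((2 * (n - k) + r).choose (n - k)))
      = (2 * n + r + 1).choose n := by
  intro n
  induction n using Nat.strong_induction_on with
  | _ n ih =>
    intro r
    match n with
    | 0 => simp
    | (m + 1) =>
      rw [Finset.sum_range_succ']
      have h0 : catalan 0 * ((2 * (m + 1 - 0) + r).choose (m + 1 - 0))
          = (2 * (m + 1) + r).choose (m + 1) := by simp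
      rw [h0]
      have hstep : ∀ j ∈ range (m + 1),
          catalan (j + 1) * ((2 * (m + 1 - (j + 1)) + r).choose (m + 1 - (j + 1)))
            = ∑ i ∈ range (j + 1),
                catalan i * (catalan (j - i) * ((2 * (m - j) + r).choose (m - j))) := by
        intro j hj
        rw [catalan_succ_range, Finset.sum_mul]
        simp only [Nat.succ_sub_succ_eq_sub, mul_assoc]
      rw [Finset.sum_congr rfl hstep]
      have hswap :
          (∑ j ∈ range (m + 1), ∑ i ∈ range (j + 1),
              catalan i * (catalan (j - i) * ((2 * (m - j) + r).choose (m - j))))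
          = ∑ i ∈ range (m + 1), ∑ j ∈ Ico i (m + 1),
              catalan i * (catalan (j - i) * ((2 * (m - j) + r).choose (m - j))) := by
        rw [← Nat.Ico_zero_eq_range, Finset.sum_Ico_Ico_comm]
        simp only [Nat.Ico_zero_eq_range]
      rw [hswap]
      have hinner : ∀ i ∈ range (m + 1),
          (∑ j ∈ Ico i (m + 1),
              catalan i * (catalan (j - i) * ((2 * (m - j) + r).choose (m - j))))
            = catalan i * ((2 * (m - i) + (r + 1)).choose (m - i)) := by
        intro i hi
        rw [Finset.mem_range] at hi
        rw [Finset.sum_Ico_eq_sum_range, ← Finset.mul_sum]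
        have hmi : m + 1 - i = (m - i) + 1 := by omega
        rw [hmi]
        congr 1
        have : ∀ k ∈ range ((m - i) + 1),
            catalan (i + k - i) * ((2 * (m - (i + k)) + r).choose (m - (i + k)))
              = catalan k * ((2 * ((m - i) - k) + r).choose ((m - i) - k)) := by
          intro k hk
          rw [Finset.mem_range] at hk
          congr 2 <;> omega
        rw [Finset.sum_congr rfl this, ih (m - i) (by omega) r, Nat.add_assoc]
      rw [Finset.sum_congr rfl hinner, ih m (by omega) (r + 1)]
      have e0 : 2 * (m + 1) + r + 1 = (2 * m + (r + 1) + 1) + 1 := by ring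
      have e1 : 2 * (m + 1) + r = 2 * m + (r + 1) + 1 := by ring
      rw [e0, e1, Nat.choose_succ_succ' (2 * m + (r + 1) + 1) m]

private lemma catalan_choose_aux (n : ℕ) :
    catalan (n + 1) + (2 * n + 2).choose n = (2 * n + 2).choose (n + 1) := by
  apply Nat.eq_of_mul_eq_mul_left (show 0 < n + 2 by omega)
  rw [Nat.mul_add]
  have h1 : (n + 2) * catalan (n + 1) = (2 * n + 2).choose (n + 1) := by
    have := succ_mul_catalan_eq_centralBinom (n + 1)
    rw [Nat.centralBinom] at this
    convert this using 2 <;> omega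
  have h2 : (n + 2) * (2 * n + 2).choose n = (n + 1) * (2 * n + 2).choose (n + 1) := by
    have hsym : (2 * n + 2).choose n = (2 * n + 2).choose (n + 2) := by
      rw [← Nat.choose_symm (by omega : n + 2 ≤ 2 * n + 2)]
      congr 1
      omega
    have := Nat.choose_succ_right_eq (2 * n + 2) (n + 1)
    have hsub : 2 * n + 2 - (n + 1) = n + 1 := by omega
    rw [hsub] at this
    simp only [show n + 1 + 1 = n + 2 from rfl] at this
    rw [hsym, Nat.mul_comm ((2 * n + 2).choose (n + 2)) (n + 2)] at *
    rw [this]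
    ring
  rw [h1, h2]
  ring

private lemma choose_double (n : ℕ) : (2 * n + 2).choose (n + 1) = 2 * (2 * n + 1).choose n := by
  have : (2 * n + 2).choose (n + 1) = (2 * n + 1).choose n + (2 * n + 1).choose (n + 1) :=
    Nat.choose_succ_succ (2 * n + 1) n
  rw [this, Nat.choose_symm_half]
  ring

/-- Abstract recurrence for the sums of `runCatalanProdAux` over all boolean lists. -/
private def Acat : ℕ → ℕ → ℕ
  | 0, k => catalan k
  | n + 1, k => Acat n (k + 1) + catalan k * Acat n 1

private def Gaux : ℕ → ℕ
  | 0 => 1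
  | m + 1 => Acat m 1

private lemma Acat_eq (n : ℕ) :
    ∀ k, Acat n k = ∑ a ∈ range (n + 1), catalan (k + a) * Gaux (n - a) := by
  induction n with
  | zero => simp [Acat, Gaux]
  | succ n ih =>
    intro k
    show Acat n (k + 1) + catalan k * Acat n 1 = _
    rw [Finset.sum_range_succ', ih (k + 1)]
    have h0 : catalan (k + 0) * Gaux (n + 1 - 0) = catalan k * Acat n 1 := by
      simp [Gaux]
    rw [h0]
    congr 1
    apply Finset.sum_congr rfl
    intro a _
    congr 2
    · omega
    · omega

private lemma Acat_one : ∀ n, Acat n 1 = (2 * n + 1).choose n := by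
  intro n
  induction n using Nat.strong_induction_on with
  | _ n ih =>
    rw [Acat_eq n 1, Finset.sum_range_succ]
    have hlast : catalan (1 + n) * Gaux (n - n) = catalan (n + 1) := by
      rw [Nat.sub_self]
      show catalan (1 + n) * 1 = _
      rw [Nat.add_comm, Nat.mul_one]
    rw [hlast]
    have hmain : ∀ a ∈ range n, catalan (1 + a) * Gaux (n - a)
        = catalan (a + 1) * ((2 * (n - (a + 1)) + 1).choose (n - (a + 1))) := by
      intro a ha; rw [mem_range] at ha
      have h1 : n - a = (n - (a + 1)) + 1 := by omega
      rw [h1]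
      show catalan (1 + a) * Acat (n - (a + 1)) 1 = _
      rw [ih (n - (a + 1)) (by omega), Nat.add_comm 1 a]
    rw [Finset.sum_congr rfl hmain]
    have hk := keyS n 1
    rw [Finset.sum_range_succ'] at hk
    simp only [catalan_zero, one_mul, Nat.sub_zero] at hk
    have e : 2 * n + 1 + 1 = 2 * n + 2 := rfl
    rw [e] at hk
    have hd := choose_double n
    have hc := catalan_choose_aux n
    omega

private lemma sum_aux : ∀ (n : ℕ) (c : Bool) (k : ℕ),
    (∑ f : Fin n → Bool, runCatalanProdAux (List.ofFn f) c k) = Acat n k := by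
  intro n
  induction n with
  | zero =>
    intro c k
    simp [runCatalanProdAux, Acat]
  | succ n ih =>
    intro c k
    have hsplit : (∑ f : Fin (n + 1) → Bool, runCatalanProdAux (List.ofFn f) c k)
        = ∑ p : Bool × (Fin n → Bool),
            runCatalanProdAux (p.1 :: List.ofFn p.2) c k := by
      apply Fintype.sum_equiv (Fin.consEquiv (fun _ : Fin (n + 1) => Bool)).symm
      intro f
      simp only [List.ofFn_succ]
      rfl
    rw [hsplit, Fintype.sum_prod_type, Fintype.sum_bool]
    symm
    show Acat n (k + 1) + catalan k * Acat n 1 = _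
    cases c with
    | true =>
      simp only [runCatalanProdAux, reduceIte, Bool.false_eq_true, if_false]
      rw [ih true (k + 1), ← Finset.mul_sum, ih false 1]
    | false =>
      simp only [runCatalanProdAux, reduceIte, Bool.true_eq_false, if_false]
      rw [ih false (k + 1), ← Finset.mul_sum, ih true 1, Nat.add_comm]

/-- `t(Aₙ) = C(2n,n)` equals the sum over all subsets `I ⊆ {1,…,n}` of the product of
`t⁺ = Catalan` over the connected components of `I` and of its complement; together with
the numerical checks `t(1) = 2`, `t(2) = 6`, `t(3) = 20`, `t⁺(1) = C₁ = 1`, `t⁺(2) = C₂ = 2`,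
`t⁺(3) = C₃ = 5`, and `t^clus(1) = C₂ = 2`, `t^clus(2) = C₃ = 5`, `t^clus(3) = C₄ = 14`. -/
theorem t_decomposition_An :
    (∀ n : ℕ, 1 ≤ n →
      ∑ f : Fin n → Bool, runCatalanProd (List.ofFn f) = (2 * n).choose n) ∧
    (2 * 1).choose 1 = 2 ∧ (2 * 2).choose 2 = 6 ∧ (2 * 3).choose 3 = 20 ∧
    catalan 1 = 1 ∧ catalan 2 = 2 ∧ catalan 3 = 5 ∧
    catalan 2 = 2 ∧ catalan 3 = 5 ∧ catalan 4 = 14 := by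
  refine ⟨?_, by decide, by decide, by decide, catalan_one, catalan_two, catalan_three,
    catalan_two, catalan_three, ?_⟩
  · intro n hn
    obtain ⟨m, rfl⟩ : ∃ m, n = m + 1 := ⟨n - 1, by omega⟩
    have hsplit : (∑ f : Fin (m + 1) → Bool, runCatalanProd (List.ofFn f))
        = ∑ p : Bool × (Fin m → Bool), runCatalanProd (p.1 :: List.ofFn p.2) := by
      apply Fintype.sum_equiv (Fin.consEquiv (fun _ : Fin (m + 1) => Bool)).symm
      intro f
      simp only [List.ofFn_succ]
      rfl
    rw [hsplit, Fintype.sum_prod_type, Fintype.sum_bool]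
    show (∑ g : Fin m → Bool, runCatalanProdAux (List.ofFn g) true 1)
        + (∑ g : Fin m → Bool, runCatalanProdAux (List.ofFn g) false 1) = _
    rw [sum_aux m true 1, sum_aux m false 1, Acat_one m]
    have : 2 * (m + 1) = (2 * m + 1) + 1 := by ring
    have e2 : 2 * m + 1 + 1 = 2 * m + 2 := rfl
    rw [this, e2, choose_double m]
    omega
  · rw [catalan_succ]
    simp [Fin.sum_univ_succ, catalan_two, catalan_three]
end
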